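/- arXiv:1806.05902 — 7 statements merged into one kernel-verified Lean document; each statement's English description precedes it below -/
import Mathlib

section
/- For every integer n ≥ 5, the commutator subgroup SG_n' = [SG_n, SG_n] of the singular braid group SG_n is finitely generated (as a subgroup of SG_n). -/
namespace SingBraid

/-- The free-group generator word for `σ_{i+1}` (0-indexed `i`). -/
def σw (n : ℕ) (i : Fin (n-1)) : FreeGroup (Fin (n-1) ⊕ Fin (n-1)) := FreeGroup.of (Sum.inl i)

/-- The free-group generator word for `ρ_{i+1}` (0-indexed `i`). -/
def ρw (n : ℕ) (i : Fin (n-1)) : FreeGroup (Fin (n-1) ⊕ Fin (n-1)) := FreeGroup.of (Sum.inr i)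

/-- Defining relators of the singular braid group `SG_n`. -/
def sgRels (n : ℕ) : Set (FreeGroup (Fin (n-1) ⊕ Fin (n-1))) :=
  {r | ∃ i j : Fin (n-1), ((i:ℕ)+1 < (j:ℕ) ∨ (j:ℕ)+1 < (i:ℕ)) ∧
      r = σw n i * σw n j * (σw n i)⁻¹ * (σw n j)⁻¹} ∪
  {r | ∃ i j : Fin (n-1), (j:ℕ) = (i:ℕ)+1 ∧
      r = σw n i * σw n j * σw n i * (σw n j * σw n i * σw n j)⁻¹} ∪
  {r | ∃ i j : Fin (n-1), ((i:ℕ)+1 < (j:ℕ) ∨ (j:ℕ)+1 < (i:ℕ)) ∧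
      r = ρw n i * ρw n j * (ρw n i)⁻¹ * (ρw n j)⁻¹} ∪
  {r | ∃ i j : Fin (n-1), (j:ℕ) = (i:ℕ)+1 ∧
      r = ρw n i * σw n j * σw n i * (σw n j * σw n i * ρw n j)⁻¹} ∪
  {r | ∃ i j : Fin (n-1), (j:ℕ) = (i:ℕ)+1 ∧
      r = ρw n j * σw n i * σw n j * (σw n i * σw n j * ρw n i)⁻¹} ∪
  {r | ∃ i j : Fin (n-1), (i = j ∨ (i:ℕ)+1 < (j:ℕ) ∨ (j:ℕ)+1 < (i:ℕ)) ∧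
      r = σw n i * ρw n j * (σw n i)⁻¹ * (ρw n j)⁻¹}

/-- The singular braid group `SG_n`, given by the Baez–Birman presentation. -/
abbrev SG (n : ℕ) := PresentedGroup (sgRels n)

/-- The generator `σ_{i+1}` of `SG_n` (0-indexed `i`). -/
def σ (n : ℕ) (i : Fin (n-1)) : SG n := PresentedGroup.of (Sum.inl i)

/-- The generator `ρ_{i+1}` of `SG_n` (0-indexed `i`). -/
def ρ (n : ℕ) (i : Fin (n-1)) : SG n := PresentedGroup.of (Sum.inr i)

end SingBraid

/-!
Let `K` be the subgroup generated by the elements `σ_i σ_1⁻¹` and `ρ_i ρ_1⁻¹`. The braid relation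
and the relation `ρ_i σ_{i+1} σ_i = σ_{i+1} σ_i ρ_{i+1}` identify all `σ_i`, resp. all `ρ_i`, in the
abelianization, so `K ≤ SG_n'`. Conversely `SG_n = K ⟨σ_1, ρ_1⟩` with `⟨σ_1, ρ_1⟩` abelian, so
`SG_n' ≤ K` as soon as `σ_1` and `ρ_1` normalize `K`. They commute with every generator of `K`
except `σ_2 σ_1⁻¹` and `ρ_2 ρ_1⁻¹`, and on these they act as conjugation by `σ_1 σ_4⁻¹ ∈ K`,
resp. `ρ_1 ρ_4⁻¹ ∈ K`, because `σ_4` and `ρ_4` (which exist as `n ≥ 5`) commute with `σ_1`, `σ_2`,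
`ρ_1` and `ρ_2`.
-/

theorem Fin.apply_eq_apply_of_forall_succ {α : Type*} {m : ℕ} {f : Fin m → α}
    (h : ∀ i j : Fin m, (j : ℕ) = i + 1 → f j = f i) (i j : Fin m) : f i = f j := by
  have h0 : 0 < m := i.pos
  suffices key : ∀ (k : ℕ) (hk : k < m), f ⟨k, hk⟩ = f ⟨0, h0⟩ by
    rw [key i i.isLt, key j j.isLt]
  intro k
  induction k with
  | zero => intro _; rfl
  | succ k ih => intro hk; rw [h ⟨k, by omega⟩ ⟨k + 1, hk⟩ rfl, ih]

namespace Subgroup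

variable {G : Type*} [Group G]

theorem conj_mem_of_commute (K : Subgroup G) {x c t : G} (hct : Commute c t)
    (hxc : x * c⁻¹ ∈ K) (ht : t ∈ K) : x * t * x⁻¹ ∈ K := by
  have hc : c * t * c⁻¹ = t := by rw [hct.eq, mul_inv_cancel_right]
  have h : x * t * x⁻¹ = (x * c⁻¹) * t * (x * c⁻¹)⁻¹ :=
    calc x * t * x⁻¹ = (x * c⁻¹) * (c * t * c⁻¹) * (x * c⁻¹)⁻¹ := by group
      _ = (x * c⁻¹) * t * (x * c⁻¹)⁻¹ := by rw [hc]
  rw [h]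
  exact mul_mem (mul_mem hxc ht) (inv_mem hxc)

theorem mem_normalizer_closure_of_conj {T : Set G} {x : G}
    (h₁ : ∀ t ∈ T, x * t * x⁻¹ ∈ closure T) (h₂ : ∀ t ∈ T, x⁻¹ * t * x ∈ closure T) :
    x ∈ normalizer (closure T) := by
  rw [mem_normalizer_iff_map_conj_eq, MonoidHom.map_closure]
  refine le_antisymm ((closure_le _).mpr ?_) ?_
  · rintro _ ⟨t, ht, rfl⟩
    exact h₁ t ht
  · rw [closure_le, ← MonoidHom.map_closure]
    exact fun t ht ↦ ⟨_, h₂ t ht, by simp [mul_assoc]⟩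

theorem mem_normalizer_closure_of_forall_commute {T : Set G} {x : G}
    (h : ∀ t ∈ T, ∃ c, Commute c t ∧ Commute x c ∧ x * c⁻¹ ∈ closure T) :
    x ∈ normalizer (closure T) := by
  refine mem_normalizer_closure_of_conj (fun t ht ↦ ?_) (fun t ht ↦ ?_) <;>
    obtain ⟨c, hct, hxc, hmem⟩ := h t ht
  · exact conj_mem_of_commute _ hct hmem (subset_closure ht)
  · have hmem' : x⁻¹ * c⁻¹⁻¹ ∈ closure T := by
      rw [inv_inv, hxc.inv_left.eq]
      simpa using inv_mem hmem
    simpa using conj_mem_of_commute _ hct.inv_left hmem' (subset_closure ht)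

theorem commutator_le_of_sup_eq_top_of_le_normalizer {K H : Subgroup G} (hKH : K ⊔ H = ⊤)
    (hH : IsMulCommutative H) (hHK : H ≤ normalizer (K : Set G)) : _root_.commutator G ≤ K := by
  have : K.Normal := normalizer_eq_top_iff.mp <| top_le_iff.mp <|
    hKH ▸ sup_le le_normalizer hHK
  exact Normal.commutator_le_of_self_sup_commutative_eq_top hKH hH

end Subgroup

namespace SingBraid

variable {n : ℕ}

theorem commute_σ_σ {i j : Fin (n-1)} (h : (i:ℕ)+1 < (j:ℕ) ∨ (j:ℕ)+1 < (i:ℕ)) :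
    Commute (σ n i) (σ n j) :=
  commutatorElement_eq_one_iff_commute.mp <| PresentedGroup.one_of_mem <|
    Or.inl <| Or.inl <| Or.inl <| Or.inl <| Or.inl ⟨i, j, h, rfl⟩

theorem commute_ρ_ρ {i j : Fin (n-1)} (h : (i:ℕ)+1 < (j:ℕ) ∨ (j:ℕ)+1 < (i:ℕ)) :
    Commute (ρ n i) (ρ n j) :=
  commutatorElement_eq_one_iff_commute.mp <| PresentedGroup.one_of_mem <|
    Or.inl <| Or.inl <| Or.inl <| Or.inr ⟨i, j, h, rfl⟩

theorem commute_σ_ρ {i j : Fin (n-1)} (h : i = j ∨ (i:ℕ)+1 < (j:ℕ) ∨ (j:ℕ)+1 < (i:ℕ)) :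
    Commute (σ n i) (ρ n j) :=
  commutatorElement_eq_one_iff_commute.mp <| PresentedGroup.one_of_mem <| Or.inr ⟨i, j, h, rfl⟩

theorem σ_mul_σ_mul_σ {i j : Fin (n-1)} (h : (j:ℕ) = (i:ℕ)+1) :
    σ n i * σ n j * σ n i = σ n j * σ n i * σ n j :=
  PresentedGroup.mk_eq_mk_of_mul_inv_mem <| Or.inl <| Or.inl <| Or.inl <| Or.inl <| Or.inr
    ⟨i, j, h, rfl⟩

theorem ρ_mul_σ_mul_σ {i j : Fin (n-1)} (h : (j:ℕ) = (i:ℕ)+1) :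
    ρ n i * σ n j * σ n i = σ n j * σ n i * ρ n j :=
  PresentedGroup.mk_eq_mk_of_mul_inv_mem <| Or.inl <| Or.inl <| Or.inr ⟨i, j, h, rfl⟩

/-- The generators `σ_{i+1}` (left summand) and `ρ_{i+1}` (right summand) of `SG_n`. -/
def gen (n : ℕ) (s : Fin (n-1) ⊕ Fin (n-1)) : SG n := PresentedGroup.of s

def index : Fin (n-1) ⊕ Fin (n-1) → Fin (n-1) := Sum.elim id id

/-- The generator of the same kind (`σ` or `ρ`) as `s`, moved to index `k`. -/
def atIndex (k : Fin (n-1)) : Fin (n-1) ⊕ Fin (n-1) → Fin (n-1) ⊕ Fin (n-1) :=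
  Sum.map (fun _ ↦ k) (fun _ ↦ k)

@[simp]
theorem index_atIndex (k : Fin (n-1)) (s : Fin (n-1) ⊕ Fin (n-1)) : index (atIndex k s) = k := by
  cases s <;> rfl

@[simp]
theorem atIndex_atIndex (k l : Fin (n-1)) (s : Fin (n-1) ⊕ Fin (n-1)) :
    atIndex k (atIndex l s) = atIndex k s := by
  cases s <;> rfl

@[simp]
theorem atIndex_index (s : Fin (n-1) ⊕ Fin (n-1)) : atIndex (index s) s = s := by
  cases s <;> rfl

theorem commute_gen {s t : Fin (n-1) ⊕ Fin (n-1)}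
    (h : (index s : ℕ) + 1 ≠ index t ∧ (index t : ℕ) + 1 ≠ index s) :
    Commute (gen n s) (gen n t) := by
  have hst : index s = index t ∨ (index s : ℕ) + 1 < index t ∨ (index t : ℕ) + 1 < index s := by
    rw [Fin.ext_iff]; omega
  have hts := Or.imp Eq.symm Or.symm hst
  rcases s with i | i <;> rcases t with j | j <;>
    simp only [index, Sum.elim_inl, Sum.elim_inr, id] at hst hts
  · rcases hst with rfl | hij
    exacts [Commute.refl _, commute_σ_σ hij]
  · exact commute_σ_ρ hst
  · exact (commute_σ_ρ hts).symm
  · rcases hst with rfl | hij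
    exacts [Commute.refl _, commute_ρ_ρ hij]

theorem abelianization_of_gen_atIndex_succ {i j : Fin (n-1)} (h : (j:ℕ) = (i:ℕ)+1)
    (s : Fin (n-1) ⊕ Fin (n-1)) :
    Abelianization.of (gen n (atIndex j s)) = Abelianization.of (gen n (atIndex i s)) := by
  cases s with
  | inl =>
    change Abelianization.of (σ n j) = Abelianization.of (σ n i)
    have e := congrArg Abelianization.of (σ_mul_σ_mul_σ (n := n) h)
    simp only [map_mul] at e
    exact (mul_left_cancel (e.trans (by rw [mul_comm (Abelianization.of (σ n j))]))).symm
  | inr =>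
    change Abelianization.of (ρ n j) = Abelianization.of (ρ n i)
    have e := congrArg Abelianization.of (ρ_mul_σ_mul_σ (n := n) h)
    simp only [map_mul] at e
    exact (mul_right_cancel ((mul_assoc _ _ _).symm.trans (e.trans (mul_comm _ _)))).symm

theorem abelianization_of_gen_eq (s : Fin (n-1) ⊕ Fin (n-1)) (k : Fin (n-1)) :
    Abelianization.of (gen n s) = Abelianization.of (gen n (atIndex k s)) := by
  conv_lhs => rw [← atIndex_index s]
  exact Fin.apply_eq_apply_of_forall_succ (fun i j h ↦ abelianization_of_gen_atIndex_succ h s) _ _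

/-- The elements `σ_{i+1} σ_{k+1}⁻¹` and `ρ_{i+1} ρ_{k+1}⁻¹` of `SG_n`. -/
def commutatorGens (k : Fin (n-1)) : Set (SG n) :=
  Set.range fun s ↦ gen n s * (gen n (atIndex k s))⁻¹

open Subgroup

theorem closure_commutatorGens_le (k : Fin (n-1)) :
    closure (commutatorGens k) ≤ commutator (SG n) := by
  rw [closure_le]
  rintro _ ⟨s, rfl⟩
  rw [SetLike.mem_coe, ← Abelianization.ker_of, MonoidHom.mem_ker, map_mul, map_inv,
    abelianization_of_gen_eq s k, mul_inv_cancel]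

theorem closure_commutatorGens_sup_eq_top (k : Fin (n-1)) :
    closure (commutatorGens k) ⊔ closure (Set.range fun s ↦ gen n (atIndex k s)) = ⊤ := by
  rw [eq_top_iff, ← PresentedGroup.closure_range_of, closure_le]
  rintro _ ⟨s, rfl⟩
  rw [← inv_mul_cancel_right (PresentedGroup.of s) (gen n (atIndex k s))]
  exact mul_mem (mem_sup_left (subset_closure ⟨s, rfl⟩)) (mem_sup_right (subset_closure ⟨s, rfl⟩))

theorem isMulCommutative_closure_gen_atIndex (k : Fin (n-1)) :
    IsMulCommutative (closure (Set.range fun s ↦ gen n (atIndex k s))) :=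
  isMulCommutative_closure <| by
    rintro _ ⟨s, rfl⟩ _ ⟨t, rfl⟩
    exact (commute_gen (by simp)).eq

theorem gen_atIndex_mem_normalizer (hn : 5 ≤ n) {k : Fin (n-1)} (hk : (k:ℕ) = 0)
    (t : Fin (n-1) ⊕ Fin (n-1)) :
    gen n (atIndex k t) ∈ normalizer (closure (commutatorGens k) : Set (SG n)) := by
  refine mem_normalizer_closure_of_forall_commute ?_
  rintro _ ⟨s, rfl⟩
  by_cases hs : (index s : ℕ) = 1
  · let c : Fin (n-1) := ⟨3, by omega⟩
    have hmem : gen n (atIndex k t) * (gen n (atIndex c t))⁻¹ ∈ closure (commutatorGens k) := by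
      have h := inv_mem (subset_closure ⟨atIndex c t, rfl⟩ : _ ∈ closure (commutatorGens k))
      simpa only [atIndex_atIndex, mul_inv_rev, inv_inv] using h
    refine ⟨gen n (atIndex c t), (commute_gen ?_).mul_right (commute_gen ?_).inv_right,
      commute_gen ?_, hmem⟩ <;> simp [c, hs, hk]
  · refine ⟨gen n (atIndex k t), (commute_gen ?_).mul_right (commute_gen ?_).inv_right,
      Commute.refl _, by simp⟩ <;> simp only [index_atIndex, hk] <;> omega

theorem commutator_eq_closure_commutatorGens (hn : 5 ≤ n) {k : Fin (n-1)} (hk : (k:ℕ) = 0) :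
    commutator (SG n) = closure (commutatorGens k) := by
  refine le_antisymm ?_ (closure_commutatorGens_le k)
  refine commutator_le_of_sup_eq_top_of_le_normalizer (closure_commutatorGens_sup_eq_top k)
    (isMulCommutative_closure_gen_atIndex k) ((closure_le _).mpr ?_)
  rintro _ ⟨s, rfl⟩
  exact gen_atIndex_mem_normalizer hn hk s

end SingBraid

open SingBraid in
/-- For every integer `n ≥ 5`, the commutator subgroup of the singular braid group `SG_n`
is finitely generated as a subgroup of `SG_n`. -/
theorem sg_commutator_fg (n : ℕ) (hn : 5 ≤ n) : (commutator (SG n)).FG := by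
  rw [commutator_eq_closure_commutatorGens hn (k := ⟨0, by omega⟩) rfl]
  exact (Subgroup.fg_iff _).mpr ⟨_, rfl, Set.finite_range _⟩
end

section
/- The commutator subgroup SG_3' = [SG_3, SG_3] of the singular braid group SG_3 is not finitely generated as a subgroup of SG_3. -/
/-!
Over `R = 𝔽₃[t, t⁻¹]`, send `σᵢ` and `ρᵢ` to the dilations `x ↦ -(x - pᵢ) + pᵢ` and
`x ↦ t (x - pᵢ) + pᵢ` of `R`, centred at `p₁ = 1` and `p₂ = -1`. Dilations with a common centre
commute, and the remaining relations of `SG₃` hold because `3 = 0` in `R`, so this defines a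
homomorphism from `SG₃` to the affine group `R ⋊ Rˣ`. As `Rˣ` is abelian, the image of `SG₃'`
consists of translations; were `SG₃'` finitely generated, this image would be a finitely generated
abelian group of exponent `3`, hence finite. But it contains the translations by all powers `tⁿ`:
`⁅σ₂, σ₁⁆` maps to the translation by `1`, and `ρ₁ⁿ` conjugates it to the translation by `tⁿ`.
-/

namespace SingBraid

variable {G : Type*} [Group G]

theorem lift_sgRels_eq_one {n : ℕ} {s r : Fin (n-1) → G}
    (hσσ : ∀ i j : Fin (n-1), (i:ℕ)+1 < j ∨ (j:ℕ)+1 < i → s i * s j = s j * s i)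
    (hσσσ : ∀ i j : Fin (n-1), (j:ℕ) = i+1 → s i * s j * s i = s j * s i * s j)
    (hρρ : ∀ i j : Fin (n-1), (i:ℕ)+1 < j ∨ (j:ℕ)+1 < i → r i * r j = r j * r i)
    (hρσσ : ∀ i j : Fin (n-1), (j:ℕ) = i+1 → r i * s j * s i = s j * s i * r j)
    (hρσσ' : ∀ i j : Fin (n-1), (j:ℕ) = i+1 → r j * s i * s j = s i * s j * r i)
    (hσρ : ∀ i j : Fin (n-1), i = j ∨ (i:ℕ)+1 < j ∨ (j:ℕ)+1 < i → s i * r j = r j * s i) :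
    ∀ x ∈ sgRels n, FreeGroup.lift (Sum.elim s r) x = 1 := by
  rintro x ((((( ⟨i, j, h, rfl⟩ | ⟨i, j, h, rfl⟩) | ⟨i, j, h, rfl⟩) | ⟨i, j, h, rfl⟩) |
    ⟨i, j, h, rfl⟩) | ⟨i, j, h, rfl⟩) <;>
  simp only [σw, ρw, map_mul, map_inv, FreeGroup.lift_apply_of, Sum.elim_inl, Sum.elim_inr,
    mul_inv_eq_iff_eq_mul, one_mul]
  exacts [hσσ i j h, hσσσ i j h, hρρ i j h, hρσσ i j h, hρσσ' i j h, hσρ i j h]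

theorem lift_sgRels_three_eq_one {a₁ a₂ b₁ b₂ : G}
    (hσσσ : a₁ * a₂ * a₁ = a₂ * a₁ * a₂)
    (hρσσ : b₁ * a₂ * a₁ = a₂ * a₁ * b₂) (hρσσ' : b₂ * a₁ * a₂ = a₁ * a₂ * b₁)
    (hσρ₁ : a₁ * b₁ = b₁ * a₁) (hσρ₂ : a₂ * b₂ = b₂ * a₂) :
    ∀ x ∈ sgRels 3, FreeGroup.lift (Sum.elim ![a₁, a₂] ![b₁, b₂]) x = 1 := by
  refine lift_sgRels_eq_one ?_ ?_ ?_ ?_ ?_ ?_ <;> intro i j h <;> fin_cases i <;> fin_cases j <;>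
    first | exact absurd h (by decide) | assumption

end SingBraid

namespace SemidirectProduct

theorem map_commutator_le_ker_rightHom {N G H : Type*} [Group N] [CommGroup G] [Group H]
    {φ : G →* MulAut N} (f : H →* N ⋊[φ] G) : (commutator H).map f ≤ rightHom.ker := by
  rw [Subgroup.map_le_iff_le_comap, MonoidHom.comap_ker]
  exact Abelianization.commutator_subset_ker _

open scoped IsMulCommutative in
theorem finite_of_le_ker_rightHom {N G : Type*} [CommGroup N] [Group G] {φ : G →* MulAut N}
    (hN : IsMulTorsion N) (K : Subgroup (N ⋊[φ] G)) [Group.FG K] (hK : K ≤ rightHom.ker) :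
    Finite K := by
  rw [← range_inl_eq_ker_rightHom] at hK
  have : IsMulCommutative K := .of_setLike_mul_comm fun a ha b hb => by
    obtain ⟨x, rfl⟩ := hK ha
    obtain ⟨y, rfl⟩ := hK hb
    rw [← map_mul, mul_comm, map_mul]
  refine CommGroup.finite_of_fg_isMulTorsion _ fun g => Submonoid.isOfFinOrder_coe.mp ?_
  obtain ⟨x, hx⟩ := hK g.2
  exact hx ▸ inl.isOfFinOrder (hN x)

end SemidirectProduct

theorem CharP.isMulTorsion_multiplicative (R : Type*) [NonAssocRing R] (p : ℕ) [CharP R p]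
    [NeZero p] : IsMulTorsion (Multiplicative R) := fun x =>
  (isOfFinOrder_ofAdd_iff (x := x.toAdd)).mpr <| isOfFinAddOrder_iff_nsmul_eq_zero.mpr
    ⟨p, NeZero.pos p, by rw [nsmul_eq_mul, CharP.cast_eq_zero, zero_mul]⟩

section Affine

variable (R : Type*) [CommRing R]

def unitsMulAut : Rˣ →* MulAut (Multiplicative R) :=
  (MulAutMultiplicative R).symm.toMonoidHom.comp (DistribMulAction.toAddAut Rˣ R)

abbrev Aff : Type _ := Multiplicative R ⋊[unitsMulAut R] Rˣ

variable {R}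

namespace Aff

-- `mk a u` is the affine map `x ↦ u x + a`.
def mk (a : R) (u : Rˣ) : Aff R := ⟨.ofAdd a, u⟩

@[simp] theorem right_mk (a : R) (u : Rˣ) : (mk a u).right = u := rfl

theorem mk_eq_mk {a b : R} {u v : Rˣ} : mk a u = mk b v ↔ a = b ∧ u = v := by
  simp [mk, SemidirectProduct.ext_iff]

theorem mk_mul_mk (a b : R) (u v : Rˣ) : mk a u * mk b v = mk (a + u * b) (u * v) := rfl

theorem inv_mk (a : R) (u : Rˣ) : (mk a u)⁻¹ = mk (↑u⁻¹ * -a) u⁻¹ := rfl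

theorem mk_left_right (g : Aff R) : mk g.left.toAdd g.right = g := rfl

theorem conj_mk_one (g : Aff R) (a : R) : g * mk a 1 * g⁻¹ = mk (g.right * a) 1 := by
  rw [← mk_left_right g, mk_mul_mk, inv_mk, mk_mul_mk, mk_eq_mk, right_mk, mul_one,
    mul_inv_cancel, Units.mul_inv_cancel_left]
  exact ⟨by ring, rfl⟩

def dilation (c : R) (u : Rˣ) : Aff R := mk (c - u * c) u

theorem dilation_mul_dilation (c : R) (u v : Rˣ) :
    dilation c u * dilation c v = dilation c (u * v) := by
  rw [dilation, dilation, dilation, mk_mul_mk, mk_eq_mk]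
  refine ⟨?_, rfl⟩
  push_cast
  ring

theorem dilation_commute (c : R) (u v : Rˣ) :
    dilation c u * dilation c v = dilation c v * dilation c u := by
  rw [dilation_mul_dilation, dilation_mul_dilation, mul_comm]

section CharThree

open scoped commutatorElement

variable [CharP R 3] (t : Rˣ)

theorem braid_reflections : dilation (1 : R) (-1) * dilation (-1) (-1) * dilation 1 (-1) =
    dilation (-1) (-1) * dilation 1 (-1) * dilation (-1) (-1) := by
  simp only [dilation, mk_mul_mk, mk_eq_mk]
  push_cast
  exact ⟨by grind, trivial⟩

theorem dilation_one_mul_reflections :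
    dilation 1 t * dilation (-1) (-1) * dilation 1 (-1) =
      dilation (-1) (-1) * dilation 1 (-1) * dilation (-1) t := by
  simp only [dilation, mk_mul_mk, mk_eq_mk]
  push_cast
  exact ⟨by grind, by simp [mul_comm]⟩

theorem dilation_neg_one_mul_reflections :
    dilation (-1) t * dilation 1 (-1) * dilation (-1) (-1) =
      dilation 1 (-1) * dilation (-1) (-1) * dilation (1 : R) t := by
  simp only [dilation, mk_mul_mk, mk_eq_mk]
  push_cast
  exact ⟨by grind, by simp [mul_comm]⟩

theorem commutatorElement_reflections :
    ⁅dilation (-1 : R) (-1), dilation (1 : R) (-1)⁆ = mk 1 1 := by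
  simp only [commutatorElement_def, dilation, inv_mk, inv_neg_one, mk_mul_mk, mk_eq_mk]
  push_cast
  exact ⟨by grind, by simp⟩

end CharThree

end Aff

end Affine

namespace SingBraid

open Aff
open scoped commutatorElement

variable {R : Type*} [CommRing R] [CharP R 3] (t : Rˣ)

def sg3ToAff : SG 3 →* Aff R :=
  PresentedGroup.toGroup (lift_sgRels_three_eq_one braid_reflections
    (dilation_one_mul_reflections t) (dilation_neg_one_mul_reflections t)
    (dilation_commute _ _ _) (dilation_commute _ _ _))

theorem sg3ToAff_σ₀ : sg3ToAff t (σ 3 0) = dilation 1 (-1) := PresentedGroup.toGroup.of _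

theorem sg3ToAff_σ₁ : sg3ToAff t (σ 3 1) = dilation (-1) (-1) := PresentedGroup.toGroup.of _

theorem sg3ToAff_ρ₀ : sg3ToAff t (ρ 3 0) = dilation 1 t := PresentedGroup.toGroup.of _

theorem mk_pow_mem_map_commutator (n : ℕ) :
    mk ↑(t ^ n) 1 ∈ (commutator (SG 3)).map (sg3ToAff t) := by
  have hright : (sg3ToAff t (ρ 3 0 ^ n)).right = t ^ n := by
    rw [map_pow, sg3ToAff_ρ₀, ← SemidirectProduct.rightHom_eq_right, map_pow]
    rfl
  refine ⟨ρ 3 0 ^ n * ⁅σ 3 1, σ 3 0⁆ * (ρ 3 0 ^ n)⁻¹, ?_, ?_⟩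
  · rw [conjugate_commutatorElement]
    exact Subgroup.commutator_mem_commutator (Subgroup.mem_top _) (Subgroup.mem_top _)
  · rw [map_mul, map_mul, map_inv, map_commutatorElement, sg3ToAff_σ₀, sg3ToAff_σ₁,
      commutatorElement_reflections, conj_mk_one, hright, mul_one]

variable {t} in
theorem not_fg_commutator_sg3 (ht : ¬IsOfFinOrder t) : ¬(commutator (SG 3)).FG := by
  intro hfg
  have : Group.FG (commutator (SG 3)) := (Group.fg_iff_subgroup_fg _).mpr hfg
  set K := (commutator (SG 3)).map (sg3ToAff t)
  have : Group.FG K := Group.fg_of_surjective ((sg3ToAff t).subgroupMap_surjective _)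
  have : Finite K :=
    SemidirectProduct.finite_of_le_ker_rightHom (CharP.isMulTorsion_multiplicative R 3) K
      (SemidirectProduct.map_commutator_le_ker_rightHom _)
  have hinj : Function.Injective fun n : ℕ => mk (↑(t ^ n) : R) 1 := fun m n h =>
    injective_pow_iff_not_isOfFinOrder.mpr ht (Units.val_injective (mk_eq_mk.mp h).1)
  exact Set.infinite_of_injective_forall_mem hinj (mk_pow_mem_map_commutator t) (Set.toFinite _)

end SingBraid

open LaurentPolynomial

theorem LaurentPolynomial.not_isOfFinOrder_T_one {R : Type*} [Semiring R] [Nontrivial R] :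
    ¬IsOfFinOrder (T 1 : R[T;T⁻¹]) := by
  refine not_isOfFinOrder_of_injective_pow fun m n h => ?_
  simp only [T_pow, mul_one] at h
  exact_mod_cast AddMonoidAlgebra.single_left_injective (one_ne_zero (α := R)) h

open SingBraid in
/-- The commutator subgroup of the singular braid group `SG_3` is not finitely generated. -/
theorem sg3_commutator_not_fg : ¬ (commutator (SG 3)).FG := by
  have : CharP (ZMod 3)[T;T⁻¹] 3 := charP_of_injective_algebraMap' (ZMod 3) 3
  refine not_fg_commutator_sg3 (t := (isUnit_T (R := ZMod 3) 1).unit) ?_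
  rw [← Units.isOfFinOrder_val, IsUnit.unit_spec]
  exact not_isOfFinOrder_T_one
end

section
/- The commutator subgroup SG_4' = [SG_4, SG_4] of the singular braid group SG_4 is not finitely generated as a subgroup of SG_4. -/
/-!
`SG₄` maps to the permutational wreath product `ℤ ≀ (S₃ × ℤ)` with lamps on `Fin 3 × ℤ`: `σᵢ` goes
to its image under the surjection `B₄ → S₃`, and `ρᵢ` moreover shifts by one and lights a lamp.
The commutator subgroup lands among the elements whose `S₃ × ℤ`-part lies in the finite group
`S₃ × 0`, and a finitely generated subgroup of those keeps all its lamps in the finite `S₃`-orbit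
of the lamps of its generators. But `σ₁⁻¹ρ₁` acts on lamps as a pure shift, so conjugating the
commutator of `σ₁⁻¹ρ₁` and `σ₂⁻¹ρ₂` by its powers lights lamps arbitrarily far out.
-/

open Multiplicative Pointwise

namespace PermWreathProduct

attribute [local instance] Finsupp.comapSMul Finsupp.comapMulAction Finsupp.comapDistribMulAction

-- `Q` moves the positions of the lamps (`Finsupp.comapSMul`), not their values.
noncomputable def lampAction (A X Q : Type*) [AddCommGroup A] [Group Q] [MulAction Q X] :
    Q →* MulAut (Multiplicative (X →₀ A)) :=
  (MulAutMultiplicative (G := X →₀ A)).symm.toMonoidHom.comp (DistribMulAction.toAddAut Q (X →₀ A))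

abbrev _root_.PermWreathProduct (A X Q : Type*) [AddCommGroup A] [Group Q] [MulAction Q X] :=
  Multiplicative (X →₀ A) ⋊[lampAction A X Q] Q

variable {A X Q : Type*} [AddCommGroup A] [Group Q] [MulAction Q X]

def lamp (g : PermWreathProduct A X Q) : X →₀ A := toAdd g.left

lemma ext {g h : PermWreathProduct A X Q} (hl : lamp g = lamp h) (hr : g.right = h.right) :
    g = h :=
  SemidirectProduct.ext (congrArg ofAdd hl) hr

lemma lamp_mul (g h : PermWreathProduct A X Q) : lamp (g * h) = lamp g + g.right • lamp h := rfl

lemma lamp_inv (g : PermWreathProduct A X Q) : lamp g⁻¹ = -(g.right⁻¹ • lamp g) := by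
  rw [lamp, SemidirectProduct.inv_left, ← smul_neg]; rfl

lemma mem_support_smul {q : Q} {f : X →₀ A} {x : X} :
    x ∈ (q • f).support ↔ q⁻¹ • x ∈ f.support := by
  simp

lemma lamp_conj_of_right_eq_one (g : PermWreathProduct A X Q) {h : PermWreathProduct A X Q}
    (hh : h.right = 1) :
    lamp (g * h * g⁻¹) = g.right • lamp h := by
  simp [lamp_mul, lamp_inv, hh, smul_neg]

lemma support_lamp_mul_subset (g h : PermWreathProduct A X Q) :
    (↑(lamp (g * h)).support : Set X) ⊆ ↑(lamp g).support ∪ g.right • ↑(lamp h).support := by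
  classical
  intro x hx
  rw [lamp_mul] at hx
  rcases Finset.mem_union.mp (Finsupp.support_add hx) with hg | hh
  · exact Or.inl hg
  · exact Or.inr (Set.mem_smul_set_iff_inv_smul_mem.mpr (mem_support_smul.mp hh))

def lampSubgroup (K : Subgroup Q) (Y : Set X) (hY : ∀ k ∈ K, ∀ y ∈ Y, k • y ∈ Y) :
    Subgroup (PermWreathProduct A X Q) where
  carrier := {g | g.right ∈ K ∧ ↑(lamp g).support ⊆ Y}
  one_mem' := ⟨K.one_mem, by simp [lamp]⟩
  mul_mem' := by
    rintro g h ⟨hgK, hgY⟩ ⟨hhK, hhY⟩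
    refine ⟨K.mul_mem hgK hhK, (support_lamp_mul_subset g h).trans (Set.union_subset hgY ?_)⟩
    rintro _ ⟨x, hx, rfl⟩
    exact hY _ hgK x (hhY hx)
  inv_mem' := by
    rintro g ⟨hgK, hgY⟩
    refine ⟨K.inv_mem hgK, fun x hx => ?_⟩
    rw [Finset.mem_coe, lamp_inv, Finsupp.support_neg, mem_support_smul, inv_inv] at hx
    simpa using hY _ (K.inv_mem hgK) _ (hgY hx)

theorem finite_iUnion_support_lamp_of_fg {H : Subgroup (PermWreathProduct A X Q)} (hH : H.FG)
    {K : Subgroup Q} (hK : (K : Set Q).Finite) (hHK : ∀ g ∈ H, g.right ∈ K) :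
    (⋃ g ∈ H, (↑(lamp g).support : Set X)).Finite := by
  obtain ⟨S, rfl⟩ := hH
  set F : Set X := ⋃ s ∈ S, ↑(lamp s).support
  have hF : F.Finite := S.finite_toSet.biUnion fun s _ => (lamp s).support.finite_toSet
  have hKF : ∀ k ∈ K, ∀ y ∈ (K : Set Q) • F, k • y ∈ (K : Set Q) • F := by
    rintro k hk _ ⟨k', hk', y, hy, rfl⟩
    exact ⟨k * k', K.mul_mem hk hk', y, hy, mul_smul k k' y⟩
  have hle : Subgroup.closure (S : Set _) ≤ lampSubgroup K _ hKF :=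
    (Subgroup.closure_le _).mpr fun s hs =>
      ⟨hHK s (Subgroup.subset_closure hs),
        fun x hx => ⟨1, K.one_mem, x, Set.mem_biUnion hs hx, one_smul Q x⟩⟩
  exact (hK.smul hF).subset (Set.iUnion₂_subset fun g hg => (hle hg).2)

end PermWreathProduct

theorem Subgroup.FG.map {G H : Type*} [Group G] [Group H] {P : Subgroup G} (hP : P.FG)
    (f : G →* H) : (P.map f).FG := by
  obtain ⟨S, rfl⟩ := hP
  classical
  exact ⟨S.image f, by rw [Finset.coe_image, MonoidHom.map_closure]⟩

lemma MonoidHom.finite_ker_snd {P N : Type*} [Group P] [Finite P] [Group N] :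
    ((snd P N).ker : Set (P × N)).Finite := by
  rw [ker_snd, Subgroup.coe_prod]
  exact Set.finite_univ.prod (Set.finite_singleton 1)

namespace SingBraid

open PermWreathProduct Equiv commutatorElement

attribute [local instance] Finsupp.comapSMul Finsupp.comapMulAction Finsupp.comapDistribMulAction

instance : MulAction (Perm (Fin 3) × Multiplicative ℤ) (Fin 3 × ℤ) where
  smul q x := (q.1 x.1, toAdd q.2 + x.2)
  one_smul x := Prod.ext rfl (zero_add x.2)
  mul_smul _ _ _ := Prod.ext rfl (add_assoc _ _ _)

@[simp] lemma smul_fin_three_prod_int (q : Perm (Fin 3) × Multiplicative ℤ) (x : Fin 3 × ℤ) :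
    q • x = (q.1 x.1, toAdd q.2 + x.2) := rfl

abbrev ColouredLamplighter := PermWreathProduct ℤ (Fin 3 × ℤ) (Perm (Fin 3) × Multiplicative ℤ)

noncomputable def perm : Perm (Fin 3) →* ColouredLamplighter :=
  SemidirectProduct.inr.comp (MonoidHom.inl _ _)

noncomputable def shiftLamp (c : Fin 3) : ColouredLamplighter :=
  ⟨ofAdd (Finsupp.single (c, 0) 1), (1, ofAdd 1)⟩

@[simp] lemma perm_right (p : Perm (Fin 3)) : (perm p).right = (p, 1) := rfl
@[simp] lemma lamp_perm (p : Perm (Fin 3)) : lamp (perm p) = 0 := rfl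
@[simp] lemma shiftLamp_right (c : Fin 3) : (shiftLamp c).right = (1, ofAdd 1) := rfl
@[simp] lemma lamp_shiftLamp (c : Fin 3) : lamp (shiftLamp c) = Finsupp.single (c, 0) 1 := rfl

lemma perm_injective : Function.Injective perm := fun _ _ h =>
  congrArg (fun g : ColouredLamplighter => g.right.1) h

lemma perm_mul_shiftLamp (p : Perm (Fin 3)) (c : Fin 3) :
    perm p * shiftLamp c = shiftLamp (p c) * perm p :=
  PermWreathProduct.ext (by simp [lamp_mul]) (by simp)

lemma perm_mul_shiftLamp_mul (p : Perm (Fin 3)) (c : Fin 3) (g : ColouredLamplighter) :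
    perm p * (shiftLamp c * g) = shiftLamp (p c) * (perm p * g) := by
  rw [← mul_assoc, perm_mul_shiftLamp, mul_assoc]

lemma shiftLamp_mul_perm_inj {c c' : Fin 3} {p p' : Perm (Fin 3)} :
    shiftLamp c * perm p = shiftLamp c' * perm p' ↔ c = c' ∧ p = p' := by
  refine ⟨fun h => ⟨?_, ?_⟩, fun ⟨hc, hp⟩ => hc ▸ hp ▸ rfl⟩
  · have := congrArg (fun g : ColouredLamplighter => lamp g (c, 0)) h
    simpa [lamp_mul, Finsupp.single_apply, eq_comm] using this
  · simpa using congrArg (fun g : ColouredLamplighter => g.right.1) h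

-- `braidPerm` is the surjection `B₄ → S₃` that exists only for four strands. The colours are
-- dictated by the relations: `σⱼρᵢ = ρᵢσⱼ` amounts to `braidPerm j` fixing `lampColour i`, and
-- `ρᵢσⱼσᵢ = σⱼσᵢρⱼ` to `lampColour i = (braidPerm j * braidPerm i) (lampColour j)`.
def braidPerm : Fin 3 → Perm (Fin 3) := ![swap 0 1, swap 1 2, swap 0 1]

def lampColour : Fin 3 → Fin 3 := ![2, 0, 2]

noncomputable def generatorImage : Fin 3 ⊕ Fin 3 → ColouredLamplighter :=
  Sum.elim (fun i => perm (braidPerm i)) (fun i => shiftLamp (lampColour i) * perm (braidPerm i))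

lemma lift_generatorImage_sgRels : ∀ r ∈ sgRels 4, FreeGroup.lift generatorImage r = 1 := by
  intro r hr
  simp only [sgRels, Set.mem_union, Set.mem_ofPred_eq] at hr
  obtain ((((⟨i, j, hc, rfl⟩ | ⟨i, j, hc, rfl⟩) | ⟨i, j, hc, rfl⟩) | ⟨i, j, hc, rfl⟩) |
    ⟨i, j, hc, rfl⟩) | ⟨i, j, hc, rfl⟩ := hr <;>
  fin_cases i <;> fin_cases j <;>
  -- every side contains at most one `ρ` and normalises to `shiftLamp c * perm p`, except in
  -- `ρ₁ρ₃ = ρ₃ρ₁`, where `ρ₁` and `ρ₃` have the same image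
  first
    | exact absurd hc (by decide)
    | simp only [σw, ρw, map_mul, map_inv, FreeGroup.lift_apply_of, generatorImage, Sum.elim_inl,
        Sum.elim_inr, mul_inv_eq_iff_eq_mul, one_mul]
      simp only [mul_assoc, perm_mul_shiftLamp_mul, ← map_mul,
        shiftLamp_mul_perm_inj, perm_injective.eq_iff]
      first | rfl | decide

noncomputable def lamplighterHom : SG 4 →* ColouredLamplighter :=
  PresentedGroup.toGroup lift_generatorImage_sgRels

lemma lamplighterHom_σ (i : Fin 3) : lamplighterHom (σ 4 i) = perm (braidPerm i) :=
  PresentedGroup.toGroup.of lift_generatorImage_sgRels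

lemma lamplighterHom_ρ (i : Fin 3) :
    lamplighterHom (ρ 4 i) = shiftLamp (lampColour i) * perm (braidPerm i) :=
  PresentedGroup.toGroup.of lift_generatorImage_sgRels

lemma lamplighterHom_σ_inv_mul_ρ (i : Fin 3) :
    lamplighterHom ((σ 4 i)⁻¹ * ρ 4 i) = shiftLamp ((braidPerm i)⁻¹ (lampColour i)) := by
  rw [map_mul, map_inv, lamplighterHom_σ, lamplighterHom_ρ, ← map_inv, ← mul_assoc,
    perm_mul_shiftLamp, mul_assoc, ← map_mul, inv_mul_cancel, map_one, mul_one]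

lemma right_commutatorElement_shiftLamp (c d : Fin 3) : ⁅shiftLamp c, shiftLamp d⁆.right = 1 := by
  simp [commutatorElement_def]

lemma lamp_commutatorElement_shiftLamp_apply {c d : Fin 3} (h : c ≠ d) :
    lamp ⁅shiftLamp c, shiftLamp d⁆ (d, 0) = -1 := by
  simp [commutatorElement_def, lamp_mul, lamp_inv, h]

lemma right_mem_ker_snd_of_mem_map_commutator {g : ColouredLamplighter}
    (hg : g ∈ (commutator (SG 4)).map lamplighterHom) :
    g.right ∈ (MonoidHom.snd (Perm (Fin 3)) (Multiplicative ℤ)).ker := by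
  obtain ⟨x, hx, rfl⟩ := hg
  exact Abelianization.commutator_subset_ker
    ((MonoidHom.snd _ _).comp (SemidirectProduct.rightHom.comp lamplighterHom)) hx

lemma infinite_iUnion_support_lamp_map_commutator :
    (⋃ g ∈ (commutator (SG 4)).map lamplighterHom,
      (↑(lamp g).support : Set (Fin 3 × ℤ))).Infinite := by
  set w : Fin 3 → SG 4 := fun i => (σ 4 i)⁻¹ * ρ 4 i
  have hw₀ : lamplighterHom (w 0) = shiftLamp 2 := lamplighterHom_σ_inv_mul_ρ 0
  have hw₁ : lamplighterHom (w 1) = shiftLamp 0 := lamplighterHom_σ_inv_mul_ρ 1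
  refine Set.infinite_of_injective_forall_mem (f := fun k : ℕ => ((0 : Fin 3), (k : ℤ)))
    (fun k l h => by simpa using h) fun k => ?_
  have hmem : w 0 ^ k * ⁅w 0, w 1⁆ * (w 0 ^ k)⁻¹ ∈ commutator (SG 4) := by
    refine Subgroup.Normal.conj_mem inferInstance _ ?_ _
    rw [commutator_eq_closure]
    exact Subgroup.subset_closure (commutator_mem_commutatorSet _ _)
  refine Set.mem_iUnion₂.mpr ⟨_, Subgroup.mem_map_of_mem lamplighterHom hmem, ?_⟩
  rw [map_mul, map_mul, map_inv, map_commutatorElement, hw₀, hw₁, Finset.mem_coe,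
    lamp_conj_of_right_eq_one _ (right_commutatorElement_shiftLamp 2 0), mem_support_smul]
  have hshift : (lamplighterHom (w 0 ^ k)).right⁻¹ • ((0 : Fin 3), (k : ℤ)) = (0, 0) := by
    rw [map_pow, hw₀, ← SemidirectProduct.rightHom_eq_right, map_pow]
    simp
  rw [hshift, Finsupp.mem_support_iff, lamp_commutatorElement_shiftLamp_apply (by decide)]
  exact neg_ne_zero.mpr one_ne_zero

end SingBraid

open SingBraid in
/-- The commutator subgroup of the singular braid group `SG_4` is not finitely generated. -/
theorem sg4_commutator_not_fg : ¬ (commutator (SG 4)).FG := fun hfg =>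
  infinite_iUnion_support_lamp_map_commutator <|
    PermWreathProduct.finite_iUnion_support_lamp_of_fg (hfg.map lamplighterHom)
      MonoidHom.finite_ker_snd fun _ => right_mem_ker_snd_of_mem_map_commutator
end

section
/- For every integer n ≥ 3, the commutator subgroup SG_n' = [SG_n, SG_n] of the singular braid group SG_n is a perfect group if and only if n ≥ 5; that is, [SG_n', SG_n'] = SG_n' holds exactly when n ≥ 5. -/
open scoped commutatorElement

section GroupFacts

variable {G : Type*} [Group G] {x y z : G}

theorem commute_of_commute_inv_mul (hxz : Commute x z) (hyz : Commute y z)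
    (h : Commute (x⁻¹ * y) (x⁻¹ * z)) : Commute x y := by
  have key : x⁻¹ * (y * x⁻¹ * z) = x⁻¹ * (x⁻¹ * y * z) :=
    calc x⁻¹ * (y * x⁻¹ * z) = x⁻¹ * y * (x⁻¹ * z) := by group
      _ = x⁻¹ * (z * x⁻¹) * y := by rw [h.eq]; group
      _ = x⁻¹ * (x⁻¹ * (z * y)) := by rw [← hxz.inv_left.eq]; group
      _ = x⁻¹ * (x⁻¹ * y * z) := by rw [← hyz.eq]; group
  exact (Commute.inv_right_iff.mp (mul_right_cancel (mul_left_cancel key))).symm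

theorem eq_of_braid_of_commute (hb : x * y * x = y * x * y) (hc : Commute x y) : x = y := by
  have : x * x * y = x * y * y :=
    calc x * x * y = x * y * x := by simpa only [mul_assoc] using congrArg (x * ·) hc.eq
      _ = y * x * y := hb
      _ = x * y * y := congrArg (· * y) hc.eq.symm
  exact mul_left_cancel (mul_right_cancel this)

end GroupFacts

theorem Fin.apply_eq_apply_of_adjacent {α : Type*} {m : ℕ} {f : Fin m → α}
    (h : ∀ i j : Fin m, (j : ℕ) = i + 1 → f i = f j) (i j : Fin m) : f i = f j := by
  suffices key : ∀ (k : ℕ) (hk : k < m), f ⟨k, hk⟩ = f ⟨0, by omega⟩ from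
    (key i i.2).trans (key j j.2).symm
  intro k
  induction k with
  | zero => intro _; rfl
  | succ k ih => intro hk; exact (h ⟨k, by omega⟩ ⟨k + 1, hk⟩ rfl).symm.trans (ih _)

theorem PresentedGroup.commute_map {α H : Type*} [Group H] {rels : Set (FreeGroup α)}
    (φ : PresentedGroup rels →* H) (h : ∀ a b, Commute (φ (of a)) (φ (of b)))
    (x y : PresentedGroup rels) : Commute (φ x) (φ y) := by
  have hrange : φ.range = Subgroup.closure (Set.range (φ ∘ of)) := by
    rw [MonoidHom.range_eq_map, ← closure_range_of, MonoidHom.map_closure, ← Set.range_comp]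
  have : IsMulCommutative φ.range := hrange ▸ Subgroup.isMulCommutative_closure
    (by rintro _ ⟨a, rfl⟩ _ ⟨b, rfl⟩; exact h a b)
  exact setLike_mul_comm (φ.mem_range.mpr ⟨x, rfl⟩) (φ.mem_range.mpr ⟨y, rfl⟩)

theorem commute_map_of_commutator_perfect {G H : Type*} [Group G] [Group H] [Group.IsSolvable H]
    (φ : G →* H) (h : ⁅commutator G, commutator G⁆ = commutator G) (x y : G) :
    Commute (φ x) (φ y) := by
  have hbot : (commutator G).map φ = ⊥ := by
    by_contra hne
    have := Group.IsSolvable.commutator_lt_of_ne_bot hne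
    rw [← Subgroup.map_commutator, h] at this
    exact this.ne rfl
  have : φ ⁅x, y⁆ ∈ (commutator G).map φ := Subgroup.mem_map_of_mem φ
    (Subgroup.commutator_mem_commutator (Subgroup.mem_top x) (Subgroup.mem_top y))
  rwa [hbot, Subgroup.mem_bot, map_commutatorElement, commutatorElement_eq_one_iff_commute] at this

instance : Group.IsSolvable (Equiv.Perm (Fin 3)) :=
  have : IsZGroup (Equiv.Perm (Fin 3)) := .of_squarefree <| by
    rw [Nat.card_perm, Nat.card_fin]
    exact (Nat.squarefree_mul_iff.mpr
      ⟨by norm_num, Nat.prime_two.squarefree, Nat.prime_three.squarefree⟩ : Squarefree (2 * 3))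
  inferInstance

section BraidRelations

variable {Q : Type*} [Group Q] {m : ℕ}

theorem eq_of_braid_of_inv_mul_mem {A : Subgroup Q} [IsMulCommutative A] (hm : 4 ≤ m)
    {s : Fin m → Q} (hA : ∀ i j, (s i)⁻¹ * s j ∈ A)
    (hfar : ∀ i j : Fin m, (i : ℕ) + 1 < j → Commute (s i) (s j))
    (hbraid : ∀ i j : Fin m, (j : ℕ) = i + 1 → s i * s j * s i = s j * s i * s j)
    (i j : Fin m) : s i = s j := by
  let s₀ := s ⟨0, by omega⟩
  have hA' : ∀ i j, Commute (s₀⁻¹ * s i) (s₀⁻¹ * s j) :=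
    fun i j => setLike_mul_comm (hA _ i) (hA _ j)
  have hs₀ : ∀ k, Commute s₀ (s k) := by
    rintro ⟨_ | _ | k, hk⟩
    · exact Commute.refl _
    -- `s 3` exists only for `m ≥ 4`; this is where `n ≥ 5` enters.
    · exact commute_of_commute_inv_mul (hfar ⟨0, by omega⟩ ⟨3, by omega⟩ (by simp))
        (hfar ⟨1, hk⟩ ⟨3, by omega⟩ (by simp)) (hA' _ _)
    · exact hfar _ _ (by simp)
  have hcomm : ∀ i j, Commute (s i) (s j) := by
    intro i j
    have ha : ∀ k, Commute s₀ (s₀⁻¹ * s k) :=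
      fun k => (Commute.refl s₀).inv_right.mul_right (hs₀ k)
    simpa only [mul_inv_cancel_left] using
      ((Commute.refl s₀).mul_right (ha j)).mul_left ((ha i).symm.mul_right (hA' i j))
  exact Fin.apply_eq_apply_of_adjacent
    (fun i j hij => eq_of_braid_of_commute (hbraid i j hij) (hcomm i j)) i j

theorem eq_of_singular_braid {s r : Fin m → Q} (hs : ∀ i j, s i = s j)
    (hsr : ∀ i, Commute (s i) (r i))
    (hrss : ∀ i j : Fin m, (j : ℕ) = i + 1 → r i * s j * s i = s j * s i * r j)
    (i j : Fin m) : r i = r j := by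
  refine Fin.apply_eq_apply_of_adjacent (fun i j hij => ?_) i j
  have h := hrss i j hij
  rw [hs j i] at h
  have hc : Commute (s i * s i) (r j) := by
    rw [hs i j]
    exact (hsr j).mul_left (hsr j)
  exact mul_right_cancel (by rw [← mul_assoc, h, hc.eq] : r i * (s i * s i) = r j * (s i * s i))

end BraidRelations

namespace SingBraid

variable {n : ℕ}

theorem σ_commute_σ {i j : Fin (n - 1)} (h : (i : ℕ) + 1 < j) : Commute (σ n i) (σ n j) :=
  PresentedGroup.mk_eq_mk_of_mul_inv_mem (x := σw n i * σw n j) (y := σw n j * σw n i) <|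
    Or.inl <| Or.inl <| Or.inl <| Or.inl <| Or.inl ⟨i, j, Or.inl h, by group⟩

theorem σ_braid {i j : Fin (n - 1)} (h : (j : ℕ) = i + 1) :
    σ n i * σ n j * σ n i = σ n j * σ n i * σ n j :=
  PresentedGroup.mk_eq_mk_of_mul_inv_mem <|
    Or.inl <| Or.inl <| Or.inl <| Or.inl <| Or.inr ⟨i, j, h, rfl⟩

theorem ρ_σ_σ {i j : Fin (n - 1)} (h : (j : ℕ) = i + 1) :
    ρ n i * σ n j * σ n i = σ n j * σ n i * ρ n j :=
  PresentedGroup.mk_eq_mk_of_mul_inv_mem <| Or.inl <| Or.inl <| Or.inr ⟨i, j, h, rfl⟩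

theorem σ_commute_ρ (i : Fin (n - 1)) : Commute (σ n i) (ρ n i) :=
  PresentedGroup.mk_eq_mk_of_mul_inv_mem (x := σw n i * ρw n i) (y := ρw n i * σw n i) <|
    Or.inr ⟨i, i, Or.inl rfl, by group⟩

theorem σ_inv_mul_σ_mem_commutator (i j : Fin (n - 1)) :
    (σ n i)⁻¹ * σ n j ∈ commutator (SG n) := by
  rw [← Abelianization.ker_of, MonoidHom.mem_ker, map_mul, map_inv, inv_mul_eq_one]
  refine Fin.apply_eq_apply_of_adjacent (f := fun i => Abelianization.of (σ n i))
    (fun i j hij => ?_) i j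
  have h := congrArg Abelianization.of (σ_braid hij)
  simp only [map_mul] at h
  rw [mul_comm (Abelianization.of (σ n j))] at h
  exact mul_left_cancel h

theorem commutator_le_commutator_commutator (hn : 5 ≤ n) :
    commutator (SG n) ≤ ⁅commutator (SG n), commutator (SG n)⁆ := by
  let π := QuotientGroup.mk' ⁅commutator (SG n), commutator (SG n)⁆
  have hA : IsMulCommutative ((commutator (SG n)).map π) := by
    rw [← Subgroup.le_centralizer_iff_isMulCommutative,
      ← Subgroup.commutator_eq_bot_iff_le_centralizer, ← Subgroup.map_commutator,
      QuotientGroup.map_mk'_self]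
  have hσ : ∀ i j, π (σ n i) = π (σ n j) :=
    eq_of_braid_of_inv_mul_mem (A := (commutator (SG n)).map π) (by omega)
      (fun i j => by simpa using Subgroup.mem_map_of_mem π (σ_inv_mul_σ_mem_commutator i j))
      (fun i j hij => (σ_commute_σ hij).map π)
      (fun i j hij => by simpa only [map_mul] using congrArg π (σ_braid hij))
  have hρ : ∀ i j, π (ρ n i) = π (ρ n j) :=
    eq_of_singular_braid hσ (fun i => (σ_commute_ρ i).map π)
      (fun i j hij => by simpa only [map_mul] using congrArg π (ρ_σ_σ hij))
  have hgen : ∀ a b, Commute (π (PresentedGroup.of a)) (π (PresentedGroup.of b)) := by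
    rintro (i | i) (j | j)
    · exact hσ i j ▸ Commute.refl _
    · exact hσ j i ▸ (σ_commute_ρ j).map π
    · exact hσ j i ▸ ((σ_commute_ρ i).map π).symm
    · exact hρ i j ▸ Commute.refl _
  rw [commutator_def, Subgroup.commutator_le]
  intro x _ y _
  rw [← QuotientGroup.eq_one_iff, ← QuotientGroup.mk'_apply, map_commutatorElement,
    commutatorElement_eq_one_iff_commute]
  exact PresentedGroup.commute_map π hgen x y

def permOfParity (k : ℕ) : Equiv.Perm (Fin 3) :=
  if Even k then Equiv.swap 0 1 else Equiv.swap 1 2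

theorem permOfParity_braid (k : ℕ) :
    permOfParity k * permOfParity (k + 1) * permOfParity k =
      permOfParity (k + 1) * permOfParity k * permOfParity (k + 1) := by
  by_cases hk : Even k <;>
    simp only [permOfParity, hk, ↓reduceIte, Nat.even_add_one, not_true_eq_false,
      not_false_eq_true] <;>
    decide

theorem permOfParity_eq_of_lt_three {k l : ℕ} (hk : k < 3) (hl : l < 3)
    (h : k = l ∨ k + 1 < l ∨ l + 1 < k) : permOfParity k = permOfParity l := by
  obtain rfl | ⟨rfl, rfl⟩ | ⟨rfl, rfl⟩ : k = l ∨ (k = 0 ∧ l = 2) ∨ (k = 2 ∧ l = 0) := by omega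
  all_goals rfl

theorem not_commute_permOfParity_zero_one : ¬Commute (permOfParity 0) (permOfParity 1) :=
  fun h => absurd h.eq (by decide)

theorem lift_permOfParity_relator (hn : n ≤ 4) : ∀ r ∈ sgRels n,
    FreeGroup.lift (Sum.elim (permOfParity ∘ Fin.val) (permOfParity ∘ Fin.val)) r = 1 := by
  have hlt : ∀ i : Fin (n - 1), (i : ℕ) < 3 := fun i => by omega
  rintro r (((((⟨i, j, h, rfl⟩ | ⟨i, j, h, rfl⟩) | ⟨i, j, h, rfl⟩) | ⟨i, j, h, rfl⟩) |
    ⟨i, j, h, rfl⟩) | ⟨i, j, h, rfl⟩) <;>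
    simp only [σw, ρw, map_mul, map_inv, FreeGroup.lift_apply_of, Sum.elim_inl, Sum.elim_inr,
      Function.comp_apply, mul_inv_eq_one]
  · rw [permOfParity_eq_of_lt_three (hlt i) (hlt j) (Or.inr h)]; group
  · rw [h]; exact permOfParity_braid i
  · rw [permOfParity_eq_of_lt_three (hlt i) (hlt j) (Or.inr h)]; group
  · rw [h]; exact permOfParity_braid i
  · rw [h]; exact (permOfParity_braid i).symm
  · rw [permOfParity_eq_of_lt_three (hlt i) (hlt j) (h.imp_left (congrArg Fin.val))]; group

def toPerm (hn : n ≤ 4) : SG n →* Equiv.Perm (Fin 3) :=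
  PresentedGroup.toGroup (lift_permOfParity_relator hn)

theorem toPerm_σ (hn : n ≤ 4) (i : Fin (n - 1)) : toPerm hn (σ n i) = permOfParity i :=
  PresentedGroup.toGroup.of _

end SingBraid

open SingBraid in
/-- For every integer `n ≥ 3`, the commutator subgroup of `SG_n` is perfect iff `n ≥ 5`. -/
theorem sg_commutator_perfect_iff (n : ℕ) (hn : 3 ≤ n) :
    ⁅commutator (SG n), commutator (SG n)⁆ = commutator (SG n) ↔ 5 ≤ n := by
  refine ⟨fun hperf => ?_, fun h5 =>
    le_antisymm (Subgroup.commutator_le_left _ _) (commutator_le_commutator_commutator h5)⟩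
  by_contra! h4
  have := commute_map_of_commutator_perfect (toPerm (by omega)) hperf
    (σ n ⟨0, by omega⟩) (σ n ⟨1, by omega⟩)
  rw [toPerm_σ, toPerm_σ] at this
  exact not_commute_permOfParity_zero_one this
end

section
/- For every integer n ≥ 4, the commutator subgroup GVB_n' = [GVB_n, GVB_n] of the generalized virtual braid group GVB_n is finitely generated (as a subgroup of GVB_n). -/
namespace GenVirtBraid

/-- The free-group generator word for `σ_{i+1}` (0-indexed `i`). -/
def σw (n : ℕ) (i : Fin (n-1)) : FreeGroup (Fin (n-1) ⊕ Fin (n-1)) := FreeGroup.of (Sum.inl i)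

/-- The free-group generator word for `ρ_{i+1}` (0-indexed `i`). -/
def ρw (n : ℕ) (i : Fin (n-1)) : FreeGroup (Fin (n-1) ⊕ Fin (n-1)) := FreeGroup.of (Sum.inr i)

/-- Defining relators of the generalized virtual braid group `GVB_n`. -/
def gvbRels (n : ℕ) : Set (FreeGroup (Fin (n-1) ⊕ Fin (n-1))) :=
  {r | ∃ i j : Fin (n-1), ((i:ℕ)+1 < (j:ℕ) ∨ (j:ℕ)+1 < (i:ℕ)) ∧
      r = σw n i * σw n j * (σw n i)⁻¹ * (σw n j)⁻¹} ∪
  {r | ∃ i j : Fin (n-1), (j:ℕ) = (i:ℕ)+1 ∧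
      r = σw n i * σw n j * σw n i * (σw n j * σw n i * σw n j)⁻¹} ∪
  {r | ∃ i j : Fin (n-1), ((i:ℕ)+1 < (j:ℕ) ∨ (j:ℕ)+1 < (i:ℕ)) ∧
      r = ρw n i * ρw n j * (ρw n i)⁻¹ * (ρw n j)⁻¹} ∪
  {r | ∃ i j : Fin (n-1), (j:ℕ) = (i:ℕ)+1 ∧
      r = ρw n i * ρw n j * ρw n i * (ρw n j * ρw n i * ρw n j)⁻¹} ∪
  {r | ∃ i j : Fin (n-1), (j:ℕ) = (i:ℕ)+1 ∧
      r = ρw n i * σw n j * σw n i * (σw n j * σw n i * ρw n j)⁻¹} ∪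
  {r | ∃ i j : Fin (n-1), (j:ℕ) = (i:ℕ)+1 ∧
      r = ρw n j * σw n i * σw n j * (σw n i * σw n j * ρw n i)⁻¹} ∪
  {r | ∃ i j : Fin (n-1), ((i:ℕ)+1 < (j:ℕ) ∨ (j:ℕ)+1 < (i:ℕ)) ∧
      r = σw n i * ρw n j * (σw n i)⁻¹ * (ρw n j)⁻¹}

/-- The generalized virtual braid group `GVB_n` (Fang's presentation). -/
abbrev GVB (n : ℕ) := PresentedGroup (gvbRels n)

/-- The generator `σ_{i+1}` of `GVB_n` (0-indexed `i`). -/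
def σ (n : ℕ) (i : Fin (n-1)) : GVB n := PresentedGroup.of (Sum.inl i)

/-- The generator `ρ_{i+1}` of `GVB_n` (0-indexed `i`). -/
def ρ (n : ℕ) (i : Fin (n-1)) : GVB n := PresentedGroup.of (Sum.inr i)

end GenVirtBraid

/-
Write `a = σ 0` and `b = ρ 2` (`σ_1` and `ρ_3` in 1-indexed notation); they commute. With
`x i = σ i * a⁻¹` and `y i = ρ i * b⁻¹`, every generator of `GVB n` is `x i * a` or `y i * b`, and
`x i`, `y i` lie in the commutator subgroup because all `σ i` are conjugate, and so are all `ρ i`.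
Hence the subgroup `K` generated by the conjugates `X i m k`, `Y i m k` of `x i`, `y i` by
`a ^ m * b ^ k` (`m k : ℤ`) is the commutator subgroup: it is normal, and `GVB n ⧸ K` is generated
by the commuting images of `a` and `b`.

Conjugation by `a` fixes `x i`, `y i` for `i ≥ 2`, conjugation by `b` fixes them for `i = 0` and
`i ≥ 4`, and the braid and mixed relations among `σ 0, …, σ 3, ρ 0, …, ρ 3` become recursions in
`m` and `k`. They show that the finitely many conjugates with `m ∈ {0, 1}` and `k ∈ {0, 1, 2}`
already generate `K`.
-/

section Generic

variable {G : Type*} [Group G]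

theorem isConj_of_isConj_succ {M : Type*} [Monoid M] {m : ℕ} {f : Fin m → M}
    (h : ∀ i j : Fin m, (j:ℕ) = (i:ℕ)+1 → IsConj (f i) (f j)) (i j : Fin m) :
    IsConj (f i) (f j) := by
  wlog hij : (i:ℕ) ≤ j generalizing i j
  · exact (this j i (by omega)).symm
  obtain ⟨j, hj⟩ := j
  induction j with
  | zero => obtain rfl : i = ⟨0, hj⟩ := Fin.ext (by simpa using hij); rfl
  | succ j ih =>
    rcases Nat.lt_or_ge (i:ℕ) (j+1) with hi | hi
    · exact (ih (by omega) (by simpa using Nat.le_of_lt_succ hi)).trans (h _ _ rfl)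
    · obtain rfl : i = ⟨j+1, hj⟩ := Fin.ext (by simp at hij ⊢; omega)
      rfl

theorem mul_inv_mem_commutator_of_isConj {g h : G} (hgh : IsConj g h) :
    g * h⁻¹ ∈ commutator G := by
  rw [← Abelianization.ker_of, MonoidHom.mem_ker, map_mul, map_inv, mul_inv_eq_one]
  exact (isConj_iff.mp hgh).elim fun c hc => by rw [← hc]; simp

theorem Int.forall_of_iff_add_one {p : ℤ → Prop} (h : ∀ m, p m ↔ p (m + 1)) (h0 : p 0) :
    ∀ m, p m := by
  intro m
  induction m with
  | zero => exact h0
  | succ i ih => exact (h i).mp ih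
  | pred i ih => exact (h _).mpr (by simpa using ih)

theorem Int.forall_of_iff_add_two {p : ℤ → Prop} (h : ∀ m, p m ↔ p (m + 2)) (h0 : p 0)
    (h1 : p 1) : ∀ m, p m := by
  have key := Int.forall_of_iff_add_one (p := fun m => p m ∧ p (m + 1))
    (fun m => by rw [add_assoc, one_add_one_eq_two, ← h]; tauto) ⟨h0, by simpa using h1⟩
  exact fun m => (key m).1

theorem Subgroup.and_mem_iff_of_eq_mul (K : Subgroup G) {x y z : G} (h : y = x * z) :
    x ∈ K ∧ y ∈ K ↔ y ∈ K ∧ z ∈ K := by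
  subst h
  constructor
  · rintro ⟨hx, hxz⟩; exact ⟨hxz, (K.mul_mem_cancel_left hx).mp hxz⟩
  · rintro ⟨hxz, hz⟩; exact ⟨(K.mul_mem_cancel_right hz).mp hxz, hxz⟩

theorem Subgroup.forall_mem_of_eq_mul (K : Subgroup G) {f : ℤ → G}
    (hf : ∀ m, f (m + 1) = f m * f (m + 2)) (h0 : f 0 ∈ K) (h1 : f 1 ∈ K) : ∀ m, f m ∈ K := by
  have key := Int.forall_of_iff_add_one (p := fun m => f m ∈ K ∧ f (m + 1) ∈ K)
    (fun m => by rw [add_assoc, one_add_one_eq_two]; exact K.and_mem_iff_of_eq_mul (hf m))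
    ⟨h0, by simpa using h1⟩
  exact fun m => (key m).1

end Generic

section ConjZPow

variable {G : Type*} [Group G] {a b : G}

def conjZPow (a b : G) (m k : ℤ) : MulAut G := MulAut.conj (a ^ m * b ^ k)

theorem conjZPow_apply (m k : ℤ) (g : G) :
    conjZPow a b m k g = a ^ m * b ^ k * g * (a ^ m * b ^ k)⁻¹ := rfl

@[simp]
theorem conjZPow_zero_zero (g : G) : conjZPow a b 0 0 g = g := by
  simp [conjZPow_apply]

theorem conjZPow_conjZPow (hab : Commute a b) (m k m' k' : ℤ) (g : G) :
    conjZPow a b m k (conjZPow a b m' k' g) = conjZPow a b (m + m') (k + k') g := by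
  have h : a ^ m * b ^ k * (a ^ m' * b ^ k') = a ^ (m + m') * b ^ (k + k') := by
    rw [zpow_add, zpow_add, mul_assoc, ← mul_assoc (b ^ k), ((hab.zpow_zpow m' k).symm).eq]
    group
  rw [conjZPow, conjZPow, ← MulAut.mul_apply, ← map_mul, h, conjZPow]

theorem conjZPow_apply_left (hab : Commute a b) (m k : ℤ) : conjZPow a b m k a = a :=
  (((Commute.refl a).zpow_left m).mul_left (hab.symm.zpow_left k)).mul_inv_cancel

theorem conjZPow_apply_right (hab : Commute a b) (m k : ℤ) : conjZPow a b m k b = b :=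
  ((hab.zpow_left m).mul_left ((Commute.refl b).zpow_left k)).mul_inv_cancel

theorem conjZPow_eq_of_commute_left (hab : Commute a b) {g : G} (hag : Commute a g) (m k : ℤ) :
    conjZPow a b m k g = conjZPow a b 0 k g := by
  have hc : Commute (a ^ m) (conjZPow a b 0 k g) := by
    simpa [conjZPow_apply] using ((hab.zpow_right k).mul_right hag).mul_right
      (hab.zpow_right k).inv_right |>.zpow_left m
  rw [← hc.mul_inv_cancel, conjZPow_apply, conjZPow_apply]
  group

theorem conjZPow_eq_of_commute_right {g : G} (hbg : Commute b g) (m k : ℤ) :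
    conjZPow a b m k g = conjZPow a b m 0 g := by
  calc conjZPow a b m k g = a ^ m * (b ^ k * g * (b ^ k)⁻¹) * (a ^ m)⁻¹ := by
        rw [conjZPow_apply]; group
    _ = conjZPow a b m 0 g := by
        rw [(hbg.zpow_left k).mul_inv_cancel, conjZPow_apply]; group

end ConjZPow

namespace GenVirtBraid

open Subgroup

section Relations

variable {n : ℕ}

theorem mk_eq_one_of_mem_gvbRels {r : FreeGroup (Fin (n-1) ⊕ Fin (n-1))} (h : r ∈ gvbRels n) :
    PresentedGroup.mk (gvbRels n) r = 1 :=
  (QuotientGroup.eq_one_iff r).mpr (subset_normalClosure h)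

theorem mk_σw (i : Fin (n-1)) : PresentedGroup.mk (gvbRels n) (σw n i) = σ n i := rfl

theorem mk_ρw (i : Fin (n-1)) : PresentedGroup.mk (gvbRels n) (ρw n i) = ρ n i := rfl

theorem commute_σ_σ (i j : Fin (n-1)) (hij : (i:ℕ)+1 < (j:ℕ) ∨ (j:ℕ)+1 < (i:ℕ)) :
    Commute (σ n i) (σ n j) := by
  simpa only [map_mul, map_inv, mk_σw, mk_ρw, mul_inv_eq_one, mul_inv_eq_iff_eq_mul,
      one_mul, commute_iff_eq] using
    mk_eq_one_of_mem_gvbRels (.inl <| .inl <| .inl <| .inl <| .inl <| .inl ⟨i, j, hij, rfl⟩)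

theorem σ_braid (i j : Fin (n-1)) (hij : (j:ℕ) = (i:ℕ)+1) :
    σ n i * σ n j * σ n i = σ n j * σ n i * σ n j := by
  simpa only [map_mul, map_inv, mk_σw, mk_ρw, mul_inv_eq_one] using
    mk_eq_one_of_mem_gvbRels (.inl <| .inl <| .inl <| .inl <| .inl <| .inr ⟨i, j, hij, rfl⟩)

theorem commute_ρ_ρ (i j : Fin (n-1)) (hij : (i:ℕ)+1 < (j:ℕ) ∨ (j:ℕ)+1 < (i:ℕ)) :
    Commute (ρ n i) (ρ n j) := by
  simpa only [map_mul, map_inv, mk_σw, mk_ρw, mul_inv_eq_one, mul_inv_eq_iff_eq_mul,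
      one_mul, commute_iff_eq] using
    mk_eq_one_of_mem_gvbRels (.inl <| .inl <| .inl <| .inl <| .inr ⟨i, j, hij, rfl⟩)

theorem ρ_braid (i j : Fin (n-1)) (hij : (j:ℕ) = (i:ℕ)+1) :
    ρ n i * ρ n j * ρ n i = ρ n j * ρ n i * ρ n j := by
  simpa only [map_mul, map_inv, mk_σw, mk_ρw, mul_inv_eq_one] using
    mk_eq_one_of_mem_gvbRels (.inl <| .inl <| .inl <| .inr ⟨i, j, hij, rfl⟩)

theorem ρ_σ_σ (i j : Fin (n-1)) (hij : (j:ℕ) = (i:ℕ)+1) :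
    ρ n i * σ n j * σ n i = σ n j * σ n i * ρ n j := by
  simpa only [map_mul, map_inv, mk_σw, mk_ρw, mul_inv_eq_one] using
    mk_eq_one_of_mem_gvbRels (.inl <| .inl <| .inr ⟨i, j, hij, rfl⟩)

theorem ρ_σ_σ' (i j : Fin (n-1)) (hij : (j:ℕ) = (i:ℕ)+1) :
    ρ n j * σ n i * σ n j = σ n i * σ n j * ρ n i := by
  simpa only [map_mul, map_inv, mk_σw, mk_ρw, mul_inv_eq_one] using
    mk_eq_one_of_mem_gvbRels (.inl <| .inr ⟨i, j, hij, rfl⟩)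

theorem commute_σ_ρ (i j : Fin (n-1)) (hij : (i:ℕ)+1 < (j:ℕ) ∨ (j:ℕ)+1 < (i:ℕ)) :
    Commute (σ n i) (ρ n j) := by
  simpa only [map_mul, map_inv, mk_σw, mk_ρw, mul_inv_eq_one, mul_inv_eq_iff_eq_mul,
      one_mul, commute_iff_eq] using
    mk_eq_one_of_mem_gvbRels (.inr ⟨i, j, hij, rfl⟩)

theorem isConj_σ_σ_of_succ (i j : Fin (n-1)) (hij : (j:ℕ) = (i:ℕ)+1) :
    IsConj (σ n i) (σ n j) :=
  isConj_iff.mpr ⟨σ n i * σ n j, by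
    rw [σ_braid i j hij]
    group⟩

theorem isConj_ρ_ρ_of_succ (i j : Fin (n-1)) (hij : (j:ℕ) = (i:ℕ)+1) :
    IsConj (ρ n i) (ρ n j) :=
  isConj_iff.mpr ⟨(σ n j * σ n i)⁻¹, calc
    (σ n j * σ n i)⁻¹ * ρ n i * (σ n j * σ n i)⁻¹⁻¹
        = (σ n j * σ n i)⁻¹ * (ρ n i * σ n j * σ n i) := by group
      _ = ρ n j := by rw [ρ_σ_σ i j hij]; group⟩

end Relations

namespace CommutatorFG

variable {n : ℕ} [Fact (4 ≤ n)]

theorem two_lt_pred : 2 < n - 1 := by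
  have : 4 ≤ n := Fact.out
  omega

def i₀ : Fin (n-1) := ⟨0, by have := two_lt_pred (n := n); omega⟩
def i₁ : Fin (n-1) := ⟨1, by have := two_lt_pred (n := n); omega⟩
def i₂ : Fin (n-1) := ⟨2, two_lt_pred⟩

def a : GVB n := σ n i₀
def b : GVB n := ρ n i₂

variable (n) in
def X (i : Fin (n-1)) (m k : ℤ) : GVB n := conjZPow a b m k (σ n i * a⁻¹)

variable (n) in
def Y (i : Fin (n-1)) (m k : ℤ) : GVB n := conjZPow a b m k (ρ n i * b⁻¹)

theorem commute_a_b : Commute (a : GVB n) b := commute_σ_ρ _ _ (.inl (by simp [i₀, i₂]))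

theorem commute_a_σ (i : Fin (n-1)) (hi : 1 < (i:ℕ)) : Commute a (σ n i) :=
  commute_σ_σ _ _ (.inl (by simpa [i₀] using hi))

theorem commute_a_ρ (i : Fin (n-1)) (hi : 1 < (i:ℕ)) : Commute a (ρ n i) :=
  commute_σ_ρ _ _ (.inl (by simpa [i₀] using hi))

theorem commute_b_σ (i : Fin (n-1)) (hi : (i:ℕ) = 0 ∨ 3 < (i:ℕ)) : Commute b (σ n i) :=
  (commute_σ_ρ _ _ (by simp only [i₂]; omega)).symm

theorem commute_b_ρ (i : Fin (n-1)) (hi : (i:ℕ) = 0 ∨ 3 < (i:ℕ)) : Commute b (ρ n i) :=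
  commute_ρ_ρ _ _ (by simp only [i₂]; omega)

theorem conjZPow_X (i : Fin (n-1)) (m k m' k' : ℤ) :
    conjZPow a b m k (X n i m' k') = X n i (m + m') (k + k') :=
  conjZPow_conjZPow commute_a_b ..

theorem conjZPow_Y (i : Fin (n-1)) (m k m' k' : ℤ) :
    conjZPow a b m k (Y n i m' k') = Y n i (m + m') (k + k') :=
  conjZPow_conjZPow commute_a_b ..

theorem X_eq (i : Fin (n-1)) (m k : ℤ) : X n i m k = conjZPow a b m k (σ n i) * a⁻¹ := by
  rw [X, map_mul, map_inv, conjZPow_apply_left commute_a_b]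

theorem Y_eq (i : Fin (n-1)) (m k : ℤ) : Y n i m k = conjZPow a b m k (ρ n i) * b⁻¹ := by
  rw [Y, map_mul, map_inv, conjZPow_apply_right commute_a_b]

theorem X_i₁_add_one_left (m k : ℤ) : X n i₁ (m + 1) k = X n i₁ m k * X n i₁ (m + 2) k := by
  have h : a * σ n i₁ * a = σ n i₁ * a * σ n i₁ := σ_braid i₀ i₁ rfl
  have base : X n i₁ 1 0 = X n i₁ 0 0 * X n i₁ 2 0 := by
    simp only [X_eq, conjZPow_apply, zpow_zero, zpow_one, zpow_two, mul_one, one_mul]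
    calc a * σ n i₁ * a⁻¹ * a⁻¹ = (a * σ n i₁ * a) * a⁻¹ * a⁻¹ * a⁻¹ := by group
      _ = _ := by rw [h]; group
  simpa only [map_mul, conjZPow_X, add_zero] using congrArg (conjZPow a b m k) base

theorem Y_i₁_add_one_right (m k : ℤ) : Y n i₁ m (k + 1) = Y n i₁ m k * Y n i₁ m (k + 2) := by
  have h : b * ρ n i₁ * b = ρ n i₁ * b * ρ n i₁ := (ρ_braid i₁ i₂ rfl).symm
  have base : Y n i₁ 0 1 = Y n i₁ 0 0 * Y n i₁ 0 2 := by
    simp only [Y_eq, conjZPow_apply, zpow_zero, zpow_one, zpow_two, mul_one, one_mul]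
    calc b * ρ n i₁ * b⁻¹ * b⁻¹ = (b * ρ n i₁ * b) * b⁻¹ * b⁻¹ * b⁻¹ := by group
      _ = _ := by rw [h]; group
  simpa only [map_mul, conjZPow_Y, add_zero] using congrArg (conjZPow a b m k) base

theorem Y_i₁_add_two_left (m k : ℤ) :
    Y n i₁ (m + 2) k = (X n i₁ m k)⁻¹ * Y n i₀ m k * X n i₁ m (k + 1) := by
  have h : ρ n i₀ * σ n i₁ * a = σ n i₁ * a * ρ n i₁ := ρ_σ_σ i₀ i₁ rfl
  have base : Y n i₁ 2 0 = (X n i₁ 0 0)⁻¹ * Y n i₀ 0 0 * X n i₁ 0 1 := by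
    simp only [X_eq, Y_eq, conjZPow_apply, zpow_zero, zpow_one, zpow_two, mul_one, one_mul]
    calc a * a * ρ n i₁ * (a * a)⁻¹ * b⁻¹
        = a * (σ n i₁)⁻¹ * (σ n i₁ * a * ρ n i₁) * a⁻¹ * a⁻¹ * b⁻¹ := by group
      _ = a * (σ n i₁)⁻¹ * ρ n i₀ * σ n i₁ * (a⁻¹ * b⁻¹) := by rw [← h]; group
      _ = _ := by rw [commute_a_b.inv_inv.eq]; group
  simpa only [map_mul, map_inv, conjZPow_X, conjZPow_Y, add_zero] using
    congrArg (conjZPow a b m k) base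

theorem Y_i₀_add_two_left (m k : ℤ) :
    Y n i₀ (m + 2) k = (X n i₁ (m + 1) k)⁻¹ * Y n i₁ m k * X n i₁ (m + 1) (k + 1) := by
  have h : ρ n i₁ * a * σ n i₁ = a * σ n i₁ * ρ n i₀ := ρ_σ_σ' i₀ i₁ rfl
  have hb : b⁻¹ * a * b = (a : GVB n) := by rw [commute_a_b.symm.inv_left.eq]; group
  have hb' : a ^ (-2 : ℤ) * b⁻¹ = (b⁻¹ : GVB n) * a ^ (-2 : ℤ) :=
    (commute_a_b.zpow_left (-2)).inv_right.eq
  have base : Y n i₀ 2 0 = (X n i₁ 1 0)⁻¹ * Y n i₁ 0 0 * X n i₁ 1 1 := by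
    simp only [X_eq, Y_eq, conjZPow_apply, zpow_zero, zpow_one, mul_one, one_mul]
    calc a ^ (2 : ℤ) * ρ n i₀ * (a ^ (2 : ℤ))⁻¹ * b⁻¹
        = a ^ (2 : ℤ) * (σ n i₁)⁻¹ * a⁻¹ * (a * σ n i₁ * ρ n i₀) * (a ^ (-2 : ℤ) * b⁻¹) := by
          group
      _ = a ^ (2 : ℤ) * (σ n i₁)⁻¹ * a⁻¹ * ρ n i₁ * (b⁻¹ * a * b) * σ n i₁ *
            (b⁻¹ * a ^ (-2 : ℤ)) := by
          rw [← h, hb, hb']; group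
      _ = _ := by group
  simpa only [map_mul, map_inv, conjZPow_X, conjZPow_Y, add_zero] using
    congrArg (conjZPow a b m k) base

theorem X_i₂_add_one_right (m k : ℤ) : X n i₂ m (k + 1) =
    (Y n i₁ m k)⁻¹ * X n i₂ m k * X n i₁ (m + 1) k * (X n i₁ (m + 1) (k + 1))⁻¹ := by
  have h : ρ n i₁ * σ n i₂ * σ n i₁ = σ n i₂ * σ n i₁ * b := ρ_σ_σ i₁ i₂ rfl
  have base : X n i₂ 0 1 =
      (Y n i₁ 0 0)⁻¹ * X n i₂ 0 0 * X n i₁ 1 0 * (X n i₁ 1 1)⁻¹ := by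
    simp only [X_eq, Y_eq, conjZPow_apply, zpow_zero, zpow_one, mul_one, one_mul]
    calc b * σ n i₂ * b⁻¹ * a⁻¹
        = b * (ρ n i₁)⁻¹ * (σ n i₂ * σ n i₁ * b) * (σ n i₁)⁻¹ * b⁻¹ * a⁻¹ := by rw [← h]; group
      _ = _ := by group
  simpa only [map_mul, map_inv, conjZPow_X, conjZPow_Y, add_zero] using
    congrArg (conjZPow a b m k) base

theorem X_i₀ (m k : ℤ) : X n i₀ m k = 1 := by
  rw [X, ← a, mul_inv_cancel, map_one]

theorem Y_i₂ (m k : ℤ) : Y n i₂ m k = 1 := by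
  rw [Y, ← b, mul_inv_cancel, map_one]

theorem X_eq_X_zero_left (i : Fin (n-1)) (hi : 1 < (i:ℕ)) (m k : ℤ) :
    X n i m k = X n i 0 k :=
  conjZPow_eq_of_commute_left commute_a_b
    ((commute_a_σ i hi).mul_right (Commute.refl a).inv_right) ..

theorem Y_eq_Y_zero_left (i : Fin (n-1)) (hi : 1 < (i:ℕ)) (m k : ℤ) :
    Y n i m k = Y n i 0 k :=
  conjZPow_eq_of_commute_left commute_a_b
    ((commute_a_ρ i hi).mul_right commute_a_b.inv_right) ..

theorem X_eq_X_zero_right (i : Fin (n-1)) (hi : (i:ℕ) = 0 ∨ 3 < (i:ℕ)) (m k : ℤ) :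
    X n i m k = X n i m 0 :=
  conjZPow_eq_of_commute_right ((commute_b_σ i hi).mul_right commute_a_b.symm.inv_right) ..

theorem Y_eq_Y_zero_right (i : Fin (n-1)) (hi : (i:ℕ) = 0 ∨ 3 < (i:ℕ)) (m k : ℤ) :
    Y n i m k = Y n i m 0 :=
  conjZPow_eq_of_commute_right ((commute_b_ρ i hi).mul_right (Commute.refl b).inv_right) ..

variable (n) in
def gens : Set (GVB n) :=
  ⋃ i, ⋃ m ∈ Set.Icc (0 : ℤ) 1, ⋃ k ∈ Set.Icc (0 : ℤ) 2, {X n i m k, Y n i m k}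

theorem gens_finite : (gens n).Finite :=
  Set.finite_iUnion fun _ => (Set.finite_Icc 0 1).biUnion fun _ _ =>
    (Set.finite_Icc 0 2).biUnion fun _ _ => Set.toFinite _

theorem X_mem_of_mem_Icc (i : Fin (n-1)) {m k : ℤ} (hm : m ∈ Set.Icc 0 1)
    (hk : k ∈ Set.Icc 0 2) : X n i m k ∈ closure (gens n) :=
  Subgroup.subset_closure <| Set.mem_iUnion.mpr
    ⟨i, Set.mem_iUnion₂.mpr ⟨m, hm, Set.mem_iUnion₂.mpr ⟨k, hk, Or.inl rfl⟩⟩⟩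

theorem Y_mem_of_mem_Icc (i : Fin (n-1)) {m k : ℤ} (hm : m ∈ Set.Icc 0 1)
    (hk : k ∈ Set.Icc 0 2) : Y n i m k ∈ closure (gens n) :=
  Subgroup.subset_closure <| Set.mem_iUnion.mpr
    ⟨i, Set.mem_iUnion₂.mpr ⟨m, hm, Set.mem_iUnion₂.mpr ⟨k, hk, Or.inr rfl⟩⟩⟩

theorem X_i₁_mem_of_mem_Icc {k : ℤ} (hk : k ∈ Set.Icc 0 2) (m : ℤ) :
    X n i₁ m k ∈ closure (gens n) :=
  (closure (gens n)).forall_mem_of_eq_mul (f := fun m => X n i₁ m k) (X_i₁_add_one_left · k)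
    (X_mem_of_mem_Icc i₁ (by norm_num) hk) (X_mem_of_mem_Icc i₁ (by norm_num) hk) m

theorem Y_i₀_mem_and_Y_i₁_mem (m : ℤ) :
    Y n i₀ m 0 ∈ closure (gens n) ∧ Y n i₁ m 0 ∈ closure (gens n) := by
  have hX₀ (m : ℤ) := X_i₁_mem_of_mem_Icc (n := n) (k := 0) (by norm_num) m
  have hX₁ (m : ℤ) := X_i₁_mem_of_mem_Icc (n := n) (k := 1) (by norm_num) m
  have hY (i : Fin (n-1)) {m : ℤ} (hm : m ∈ Set.Icc 0 1) := Y_mem_of_mem_Icc i hm (k := 0)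
  revert m
  refine Int.forall_of_iff_add_two (fun m => ?_)
    ⟨hY i₀ (by norm_num) (by norm_num), hY i₁ (by norm_num) (by norm_num)⟩
    ⟨hY i₀ (by norm_num) (by norm_num), hY i₁ (by norm_num) (by norm_num)⟩
  -- `Y_i₁_add_two_left` and `Y_i₀_add_two_left` exchange `Y n i₀` and `Y n i₁` under `m ↦ m + 2`
  rw [Y_i₀_add_two_left, Y_i₁_add_two_left, zero_add, mul_mem_cancel_right (hX₁ _),
    mul_mem_cancel_left (inv_mem (hX₀ _)), mul_mem_cancel_right (hX₁ _),
    mul_mem_cancel_left (inv_mem (hX₀ _)), and_comm]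

theorem Y_i₀_mem (m k : ℤ) : Y n i₀ m k ∈ closure (gens n) := by
  rw [Y_eq_Y_zero_right i₀ (.inl rfl)]
  exact (Y_i₀_mem_and_Y_i₁_mem m).1

theorem Y_i₁_mem (m k : ℤ) : Y n i₁ m k ∈ closure (gens n) := by
  refine (closure (gens n)).forall_mem_of_eq_mul (f := fun k => Y n i₁ m k)
    (Y_i₁_add_one_right m) (Y_i₀_mem_and_Y_i₁_mem m).2 ?_ k
  obtain ⟨m, rfl⟩ : ∃ m', m = m' + 2 := ⟨m - 2, by ring⟩
  rw [Y_i₁_add_two_left]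
  exact mul_mem (mul_mem (inv_mem (X_i₁_mem_of_mem_Icc (by norm_num) m)) (Y_i₀_mem m 1))
    (X_i₁_mem_of_mem_Icc (by norm_num) m)

theorem X_i₁_mem (m k : ℤ) : X n i₁ m k ∈ closure (gens n) := by
  revert k
  refine Int.forall_of_iff_add_one (fun k => ?_) (X_i₁_mem_of_mem_Icc (by norm_num) m)
  have e : X n i₁ m (k + 1) = (Y n i₀ m k)⁻¹ * X n i₁ m k * Y n i₁ (m + 2) k := by
    rw [Y_i₁_add_two_left]; group
  rw [e, mul_mem_cancel_right (Y_i₁_mem _ _), mul_mem_cancel_left (inv_mem (Y_i₀_mem _ _))]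

theorem X_i₂_mem (m k : ℤ) : X n i₂ m k ∈ closure (gens n) := by
  rw [X_eq_X_zero_left i₂ (by simp [i₂])]
  revert k
  refine Int.forall_of_iff_add_one (fun k => ?_) (X_mem_of_mem_Icc i₂ (by norm_num) (by norm_num))
  rw [X_i₂_add_one_right, mul_mem_cancel_right (inv_mem (X_i₁_mem _ _)),
    mul_mem_cancel_right (X_i₁_mem _ _), mul_mem_cancel_left (inv_mem (Y_i₁_mem _ _))]

section IndexThree

variable (h3 : 3 < n - 1)

theorem Y_three_add_one_right (m k : ℤ) :
    Y n ⟨3, h3⟩ m (k + 1) = Y n ⟨3, h3⟩ m k * Y n ⟨3, h3⟩ m (k + 2) := by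
  have h : b * ρ n ⟨3, h3⟩ * b = ρ n ⟨3, h3⟩ * b * ρ n ⟨3, h3⟩ := ρ_braid i₂ _ rfl
  have base : Y n ⟨3, h3⟩ 0 1 = Y n ⟨3, h3⟩ 0 0 * Y n ⟨3, h3⟩ 0 2 := by
    simp only [Y_eq, conjZPow_apply, zpow_zero, zpow_one, zpow_two, mul_one, one_mul]
    calc b * ρ n ⟨3, h3⟩ * b⁻¹ * b⁻¹ = (b * ρ n ⟨3, h3⟩ * b) * b⁻¹ * b⁻¹ * b⁻¹ := by group
      _ = _ := by rw [h]; group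
  simpa only [map_mul, conjZPow_Y, add_zero] using congrArg (conjZPow a b m k) base

theorem X_three_add_one_right (m k : ℤ) : X n ⟨3, h3⟩ m (k + 1) =
    X n ⟨3, h3⟩ m k * X n i₂ m k * Y n ⟨3, h3⟩ m k * (X n i₂ m (k + 1))⁻¹ := by
  have h : b * σ n ⟨3, h3⟩ * σ n i₂ = σ n ⟨3, h3⟩ * σ n i₂ * ρ n ⟨3, h3⟩ := ρ_σ_σ i₂ _ rfl
  have ha₂ := commute_a_σ (n := n) i₂ (by simp [i₂])
  have ha₃ := commute_a_ρ (n := n) ⟨3, h3⟩ (by simp)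
  have base : X n ⟨3, h3⟩ 0 1 =
      X n ⟨3, h3⟩ 0 0 * X n i₂ 0 0 * Y n ⟨3, h3⟩ 0 0 * (X n i₂ 0 1)⁻¹ := by
    simp only [X_eq, Y_eq, conjZPow_apply, zpow_zero, zpow_one, mul_one, one_mul]
    calc b * σ n ⟨3, h3⟩ * b⁻¹ * a⁻¹ = (b * σ n ⟨3, h3⟩ * σ n i₂) * (σ n i₂)⁻¹ * b⁻¹ * a⁻¹ := by
          group
      _ = σ n ⟨3, h3⟩ * σ n i₂ * (ρ n ⟨3, h3⟩ * b⁻¹) * (b * (σ n i₂)⁻¹ * b⁻¹) * a⁻¹ := by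
          rw [h]; group
      _ = σ n ⟨3, h3⟩ * (a⁻¹ * σ n i₂ * a⁻¹⁻¹) *
            (a ^ (-2 : ℤ) * (ρ n ⟨3, h3⟩ * b⁻¹) * (a ^ (-2 : ℤ))⁻¹) *
            (a⁻¹ * (b * (σ n i₂)⁻¹ * b⁻¹) * a⁻¹⁻¹) * a⁻¹ := by
          rw [ha₂.inv_left.mul_inv_cancel,
            ((ha₃.mul_right commute_a_b.inv_right).zpow_left (-2)).mul_inv_cancel,
            ((commute_a_b.mul_right ha₂.inv_right).mul_right
              commute_a_b.inv_right).inv_left.mul_inv_cancel]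
      _ = _ := by group
  simpa only [map_mul, map_inv, conjZPow_X, conjZPow_Y, add_zero] using
    congrArg (conjZPow a b m k) base

theorem Y_three_mem (m k : ℤ) : Y n ⟨3, h3⟩ m k ∈ closure (gens n) := by
  rw [Y_eq_Y_zero_left _ (by simp)]
  exact (closure (gens n)).forall_mem_of_eq_mul (f := fun k => Y n ⟨3, h3⟩ 0 k)
    (Y_three_add_one_right h3 0) (Y_mem_of_mem_Icc _ (by norm_num) (by norm_num))
    (Y_mem_of_mem_Icc _ (by norm_num) (by norm_num)) k

theorem X_three_mem (m k : ℤ) : X n ⟨3, h3⟩ m k ∈ closure (gens n) := by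
  rw [X_eq_X_zero_left _ (by simp)]
  revert k
  refine Int.forall_of_iff_add_one (fun k => ?_) (X_mem_of_mem_Icc _ (by norm_num) (by norm_num))
  rw [X_three_add_one_right, mul_mem_cancel_right (inv_mem (X_i₂_mem _ _)),
    mul_mem_cancel_right (Y_three_mem h3 _ _), mul_mem_cancel_right (X_i₂_mem _ _)]

end IndexThree

theorem X_mem (i : Fin (n-1)) (m k : ℤ) : X n i m k ∈ closure (gens n) := by
  obtain ⟨_ | _ | _ | _ | j, hi⟩ := i
  · exact (X_i₀ (n := n) m k).symm ▸ one_mem _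
  · exact X_i₁_mem m k
  · exact X_i₂_mem m k
  · exact X_three_mem hi m k
  · rw [X_eq_X_zero_left _ (by simp), X_eq_X_zero_right _ (.inr (by simp))]
    exact X_mem_of_mem_Icc _ (by norm_num) (by norm_num)

theorem Y_mem (i : Fin (n-1)) (m k : ℤ) : Y n i m k ∈ closure (gens n) := by
  obtain ⟨_ | _ | _ | _ | j, hi⟩ := i
  · exact Y_i₀_mem m k
  · exact Y_i₁_mem m k
  · exact (Y_i₂ (n := n) m k).symm ▸ one_mem _
  · exact Y_three_mem hi m k
  · rw [Y_eq_Y_zero_left _ (by simp), Y_eq_Y_zero_right _ (.inr (by simp))]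
    exact Y_mem_of_mem_Icc _ (by norm_num) (by norm_num)

theorem gens_subset_commutator : gens n ⊆ commutator (GVB n) := by
  have hσ : ∀ i, σ n i * a⁻¹ ∈ commutator (GVB n) := fun i =>
    mul_inv_mem_commutator_of_isConj (isConj_of_isConj_succ isConj_σ_σ_of_succ i i₀)
  have hρ : ∀ i, ρ n i * b⁻¹ ∈ commutator (GVB n) := fun i =>
    mul_inv_mem_commutator_of_isConj (isConj_of_isConj_succ isConj_ρ_ρ_of_succ i i₂)
  simp only [gens, Set.iUnion_subset_iff, Set.insert_subset_iff, Set.singleton_subset_iff]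
  exact fun i m _ k _ => ⟨Normal.conj_mem inferInstance _ (hσ i) (a ^ m * b ^ k),
    Normal.conj_mem inferInstance _ (hρ i) (a ^ m * b ^ k)⟩

theorem eq_top_of_closure_gens_le {H : Subgroup (GVB n)} (hK : closure (gens n) ≤ H)
    (ha : a ∈ H) (hb : b ∈ H) : H = ⊤ := by
  rw [eq_top_iff, ← PresentedGroup.closure_range_of, closure_le]
  rintro _ ⟨i | i, rfl⟩
  · have e : PresentedGroup.of (Sum.inl i) = X n i 0 0 * a := by simp [X, σ]
    exact e ▸ mul_mem (hK (X_mem i 0 0)) ha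
  · have e : PresentedGroup.of (Sum.inr i) = Y n i 0 0 * b := by simp [Y, ρ]
    exact e ▸ mul_mem (hK (Y_mem i 0 0)) hb

theorem conjZPow_mem_closure_gens (m k : ℤ) {g : GVB n} (hg : g ∈ gens n) :
    conjZPow a b m k g ∈ closure (gens n) := by
  simp only [gens, Set.mem_iUnion, Set.mem_insert_iff, Set.mem_singleton_iff] at hg
  obtain ⟨i, m', -, k', -, rfl | rfl⟩ := hg
  · exact conjZPow_X i m k m' k' ▸ X_mem i _ _
  · exact conjZPow_Y i m k m' k' ▸ Y_mem i _ _

theorem a_mem_normalizer : a ∈ normalizer (closure (gens n) : Set (GVB n)) := by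
  refine le_normalizer_closure_iff.mpr ?_ (mem_zpowers a)
  rintro _ ⟨m, rfl⟩ g hg
  simpa [conjZPow_apply] using conjZPow_mem_closure_gens m 0 hg

theorem b_mem_normalizer : b ∈ normalizer (closure (gens n) : Set (GVB n)) := by
  refine le_normalizer_closure_iff.mpr ?_ (mem_zpowers b)
  rintro _ ⟨k, rfl⟩ g hg
  simpa [conjZPow_apply] using conjZPow_mem_closure_gens 0 k hg

instance closure_gens_normal : (closure (gens n)).Normal :=
  normalizer_eq_top_iff.mp
    (eq_top_of_closure_gens_le le_normalizer a_mem_normalizer b_mem_normalizer)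

theorem commutator_eq_closure_gens : commutator (GVB n) = closure (gens n) := by
  have hab : ∀ g ∈ ({a, b} : Set (GVB n)), g ∈ closure (gens n) ⊔ closure {a, b} :=
    fun g hg => mem_sup_right (subset_closure hg)
  refine le_antisymm ?_ ((closure_le _).mpr gens_subset_commutator)
  refine Normal.commutator_le_of_self_sup_commutative_eq_top
    (eq_top_of_closure_gens_le le_sup_left (hab a (by simp)) (hab b (by simp)))
    (isMulCommutative_closure ?_)
  simp only [Set.mem_insert_iff, Set.mem_singleton_iff]
  rintro _ (rfl | rfl) _ (rfl | rfl)
  exacts [rfl, commute_a_b.eq, commute_a_b.symm.eq, rfl]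

end CommutatorFG

end GenVirtBraid

open GenVirtBraid in
/-- For every integer `n ≥ 4`, the commutator subgroup of the generalized virtual braid group
`GVB_n` is finitely generated as a subgroup of `GVB_n`. -/
theorem gvb_commutator_fg (n : ℕ) (hn : 4 ≤ n) : (commutator (GVB n)).FG := by
  have : Fact (4 ≤ n) := ⟨hn⟩
  exact (Subgroup.fg_iff _).mpr
    ⟨CommutatorFG.gens n, CommutatorFG.commutator_eq_closure_gens.symm, CommutatorFG.gens_finite⟩
end

section
/- There exists a surjective group homomorphism from the commutator subgroup GVB_3' = [GVB_3, GVB_3] of the generalized virtual braid group GVB_3 onto the free group on a countably infinite set (the free group on ℕ). -/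
/-!
Sending every `σᵢ` to the generator `τ` of `ℤ` and every `ρᵢ` to the letter `false` defines a map
`GVB₃ → F(Bool) ⋊ ℤ`, where `ℤ` acts by swapping the two letters; the mixed relation
`ρ σ σ = σ σ ρ` holds because the swap is an involution, and the far-commutation relations are
vacuous for `n = 3`. Commutators land in `F(Bool)` with exponent sum `0`. The map
`F(Bool) → F(ℤ) ⋊ ℤ`, `false ↦ t`, `true ↦ x₀ t` (with `t` shifting indices) sends exponent-sum-zero
words into `F(ℤ)`, and the image of `ρᵏ ⁅σ, ρ⁆ ρ⁻ᵏ` is `xₖ`, so every basis element is hit.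
-/

open Multiplicative SemidirectProduct
open scoped commutatorElement

namespace FreeGroup

variable {α : Type*}

def freeGroupCongrHom : Equiv.Perm α →* MulAut (FreeGroup α) where
  toFun := freeGroupCongr
  map_one' := freeGroupCongr_refl
  map_mul' e f := (freeGroupCongr_trans f e).symm

@[simp]
theorem freeGroupCongrHom_apply (e : Equiv.Perm α) :
    freeGroupCongrHom e = freeGroupCongr e :=
  rfl

def expSum : FreeGroup α →* Multiplicative ℤ := lift fun _ => ofAdd 1

theorem expSum_freeGroupCongr (e : Equiv.Perm α) (w : FreeGroup α) :
    expSum (freeGroupCongr e w) = expSum w := by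
  induction w using FreeGroup.induction_on with
  | C1 => simp
  | of a => simp [expSum, freeGroupCongr_apply]
  | inv_of a _ => simp_all
  | mul x y hx hy => simp_all

theorem surjective_of_forall_of_mem_range {G : Type*} [Group G] (f : G →* FreeGroup α)
    (h : ∀ a, of a ∈ f.range) : Function.Surjective f :=
  MonoidHom.range_eq_top.1 <| eq_top_iff.2 <| (closure_range_of α).ge.trans <|
    (Subgroup.closure_le _).2 <| Set.range_subset_iff.2 h

end FreeGroup

namespace SemidirectProduct

variable {N Q G : Type*} [Group N] [Group Q] [Group G] {φ : Q →* MulAut N}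

def leftHomOfRightEqOne (f : G →* N ⋊[φ] Q) (hf : ∀ g, (f g).right = 1) : G →* N where
  toFun g := (f g).left
  map_one' := by simp
  map_mul' a b := by simp [hf]

@[simp]
theorem leftHomOfRightEqOne_apply (f : G →* N ⋊[φ] Q) (hf : ∀ g, (f g).right = 1) (g : G) :
    leftHomOfRightEqOne f hf g = (f g).left :=
  rfl

theorem right_eq_one_of_mem_commutator {Q : Type*} [CommGroup Q] {φ : Q →* MulAut N}
    (f : G →* N ⋊[φ] Q) {g : G} (hg : g ∈ commutator G) : (f g).right = 1 :=
  Abelianization.commutator_subset_ker (rightHom.comp f) hg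

theorem map_left_eq_one_of_mem_commutator {A : Type*} [CommGroup A] (d : N →* A)
    (hd : ∀ q n, d (φ q n) = d n) (f : G →* N ⋊[φ] Q) {g : G} (hg : g ∈ commutator G) :
    d (f g).left = 1 := by
  let D : N ⋊[φ] Q →* A := lift d 1 fun q => by ext n; simp [hd]
  simpa [D, lift] using Abelianization.commutator_subset_ker (D.comp f) hg

theorem inr_mul_inl_of_apply_eq {q : Q} {n : N} (h : φ q n = n) :
    (inr q : N ⋊[φ] Q) * inl n = inl n * inr q := by
  ext <;> simp [h]

end SemidirectProduct

namespace GenVirtBraid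

section gvb3ToGroup

variable {K : Type*} [Group K] (s r : K) (h : Commute (s * s) r)

def gvb3ToGroup : GVB 3 →* K :=
  PresentedGroup.toGroup (f := Sum.elim (fun _ => s) fun _ => r) <| by
    have far (i j : Fin (3 - 1)) : ¬((i : ℕ) + 1 < j ∨ (j : ℕ) + 1 < i) := by omega
    have mixed : r * s * s * (s * s * r)⁻¹ = 1 := by rw [mul_inv_eq_one, mul_assoc, h.eq]
    rintro _ ((((((⟨i, j, hij, rfl⟩ | ⟨i, j, hij, rfl⟩) | ⟨i, j, hij, rfl⟩) | ⟨i, j, hij, rfl⟩) |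
      ⟨i, j, hij, rfl⟩) | ⟨i, j, hij, rfl⟩) | ⟨i, j, hij, rfl⟩)
    · exact absurd hij (far i j)
    · simp [σw]
    · exact absurd hij (far i j)
    · simp [ρw]
    · simpa [σw, ρw] using mixed
    · simpa [σw, ρw] using mixed
    · exact absurd hij (far i j)

@[simp]
theorem gvb3ToGroup_σ (i : Fin (3 - 1)) : gvb3ToGroup s r h (σ 3 i) = s :=
  PresentedGroup.toGroup.of _

@[simp]
theorem gvb3ToGroup_ρ (i : Fin (3 - 1)) : gvb3ToGroup s r h (ρ 3 i) = r :=
  PresentedGroup.toGroup.of _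

end gvb3ToGroup

def swapAction : Multiplicative ℤ →* MulAut (FreeGroup Bool) :=
  FreeGroup.freeGroupCongrHom.comp (zpowersHom _ Equiv.boolNot)

theorem swapAction_apply (q : Multiplicative ℤ) (w : FreeGroup Bool) :
    swapAction q w = FreeGroup.freeGroupCongr (Equiv.boolNot ^ q.toAdd) w :=
  rfl

abbrev SwapExt := FreeGroup Bool ⋊[swapAction] Multiplicative ℤ

theorem commute_sq_swapExt :
    Commute ((inr (ofAdd 1) : SwapExt) * inr (ofAdd 1)) (inl (FreeGroup.of false)) := by
  rw [← map_mul]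
  exact inr_mul_inl_of_apply_eq (by simp [swapAction_apply, ← ofAdd_add, sq])

def toSwapExt : GVB 3 →* SwapExt :=
  gvb3ToGroup (inr (ofAdd 1)) (inl (FreeGroup.of false)) commute_sq_swapExt

theorem toSwapExt_commutatorElement (i j : Fin (3 - 1)) :
    toSwapExt ⁅σ 3 i, ρ 3 j⁆ = inl (FreeGroup.of true * (FreeGroup.of false)⁻¹) := by
  simp only [commutatorElement_def, map_mul, map_inv, toSwapExt, gvb3ToGroup_σ, gvb3ToGroup_ρ]
  rw [← map_inv inr, ← inl_aut]
  simp [swapAction_apply]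

theorem toSwapExt_ρ_zpow (i : Fin (3 - 1)) (k : ℤ) :
    toSwapExt (ρ 3 i ^ k) = inl (FreeGroup.of false ^ k) := by
  simp [toSwapExt]

def shiftAction : Multiplicative ℤ →* MulAut (FreeGroup ℤ) :=
  FreeGroup.freeGroupCongrHom.comp (zpowersHom _ (Equiv.addRight 1))

theorem shiftAction_apply (q : Multiplicative ℤ) (w : FreeGroup ℤ) :
    shiftAction q w = FreeGroup.freeGroupCongr (Equiv.addRight q.toAdd) w := by
  simp [shiftAction]

abbrev ShiftExt := FreeGroup ℤ ⋊[shiftAction] Multiplicative ℤ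

theorem shiftExt_conj_of (k m : ℤ) :
    (inr (ofAdd 1) : ShiftExt) ^ k * inl (FreeGroup.of m) * ((inr (ofAdd 1)) ^ k)⁻¹ =
      inl (FreeGroup.of (m + k)) := by
  rw [← map_zpow, ← map_inv, ← inl_aut, shiftAction_apply]
  simp

def freeGroupBoolToShiftExt : FreeGroup Bool →* ShiftExt :=
  FreeGroup.lift fun b => cond b (inl (FreeGroup.of 0) * inr (ofAdd 1)) (inr (ofAdd 1))

theorem right_freeGroupBoolToShiftExt (w : FreeGroup Bool) :
    (freeGroupBoolToShiftExt w).right = FreeGroup.expSum w := by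
  induction w using FreeGroup.induction_on with
  | C1 => simp
  | of b => cases b <;> simp [freeGroupBoolToShiftExt, FreeGroup.expSum]
  | inv_of b h => simp_all
  | mul x y hx hy => simp_all

theorem freeGroupBoolToShiftExt_conj (k : ℤ) :
    freeGroupBoolToShiftExt
      (FreeGroup.of false ^ k * (FreeGroup.of true * (FreeGroup.of false)⁻¹) *
        (FreeGroup.of false ^ k)⁻¹) = inl (FreeGroup.of k) := by
  simp [freeGroupBoolToShiftExt, shiftExt_conj_of]

def commutatorToFreeGroupBool : commutator (GVB 3) →* FreeGroup Bool :=
  leftHomOfRightEqOne (toSwapExt.comp (commutator _).subtype) fun x =>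
    right_eq_one_of_mem_commutator toSwapExt x.2

theorem expSum_commutatorToFreeGroupBool (x : commutator (GVB 3)) :
    FreeGroup.expSum (commutatorToFreeGroupBool x) = 1 :=
  map_left_eq_one_of_mem_commutator _ (fun _ _ => FreeGroup.expSum_freeGroupCongr _ _) toSwapExt
    x.2

def commutatorToFreeGroupInt : commutator (GVB 3) →* FreeGroup ℤ :=
  leftHomOfRightEqOne (freeGroupBoolToShiftExt.comp commutatorToFreeGroupBool) fun x => by
    simp [right_freeGroupBoolToShiftExt, expSum_commutatorToFreeGroupBool]

theorem conj_commutatorElement_mem_commutator (k : ℤ) :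
    ρ 3 0 ^ k * ⁅σ 3 0, ρ 3 0⁆ * (ρ 3 0 ^ k)⁻¹ ∈ commutator (GVB 3) :=
  Subgroup.Normal.conj_mem inferInstance _
    (Subgroup.commutator_mem_commutator (Subgroup.mem_top _) (Subgroup.mem_top _)) _

theorem toSwapExt_conj_commutatorElement (k : ℤ) :
    toSwapExt (ρ 3 0 ^ k * ⁅σ 3 0, ρ 3 0⁆ * (ρ 3 0 ^ k)⁻¹) =
      inl (FreeGroup.of false ^ k * (FreeGroup.of true * (FreeGroup.of false)⁻¹) *
        (FreeGroup.of false ^ k)⁻¹) := by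
  rw [map_mul, map_mul, map_inv, toSwapExt_ρ_zpow, toSwapExt_commutatorElement, ← map_inv,
    ← map_mul, ← map_mul]

theorem commutatorToFreeGroupInt_surjective : Function.Surjective commutatorToFreeGroupInt := by
  refine FreeGroup.surjective_of_forall_of_mem_range _ fun k =>
    ⟨⟨_, conj_commutatorElement_mem_commutator k⟩, ?_⟩
  simp only [commutatorToFreeGroupInt, commutatorToFreeGroupBool, leftHomOfRightEqOne_apply,
    MonoidHom.comp_apply, Subgroup.coe_subtype, toSwapExt_conj_commutatorElement, left_inl,
    freeGroupBoolToShiftExt_conj]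

end GenVirtBraid

open GenVirtBraid in
/-- There is a surjective group homomorphism from the commutator subgroup of `GVB_3` onto
the free group on a countably infinite set. -/
theorem gvb3_commutator_surj_onto_free :
    ∃ f : commutator (GVB 3) →* FreeGroup ℕ, Function.Surjective f :=
  ⟨(FreeGroup.freeGroupCongr (Denumerable.eqv ℤ)).toMonoidHom.comp commutatorToFreeGroupInt,
    (FreeGroup.freeGroupCongr _).surjective.comp commutatorToFreeGroupInt_surjective⟩
end

section
/- The commutator subgroups GVB_3' = [GVB_3, GVB_3] and GVB_4' = [GVB_4, GVB_4] of the generalized virtual braid groups GVB_3 and GVB_4 are not perfect groups; that is, [GVB_3', GVB_3'] ≠ GVB_3' and [GVB_4', GVB_4'] ≠ GVB_4'. -/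
/-! Sending both `σ_i` and `ρ_i` to `(0 1)` or `(1 2)` according to the parity of `i` respects
the relations of `GVB_n` for `n ≤ 4`, and gives a surjection `GVB_n → S₃`. If `GVB_n'` were
perfect, its image `S₃'` would be perfect too; but `S₃` is solvable and non-abelian, so its
nontrivial commutator subgroup is not perfect. -/

open Equiv Subgroup

theorem commutator_commutator_ne_of_surjective {G H : Type*} [Group G] [Group H]
    [Group.IsSolvable H] {f : G →* H} (hf : Function.Surjective f) (hH : commutator H ≠ ⊥) :
    ⁅commutator G, commutator G⁆ ≠ commutator G := by
  intro hG
  have hmap := congrArg (map f) hG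
  rw [map_commutator, ← derivedSeries_one, map_derivedSeries_eq hf] at hmap
  exact (Group.IsSolvable.commutator_lt_of_ne_bot hH).ne hmap

instance : Group.IsSolvable (Perm (Fin 3)) := by
  have : IsZGroup (Perm (Fin 3)) :=
    IsZGroup.of_squarefree (by rw [Nat.card_perm, Nat.card_fin]; decide +kernel)
  infer_instance

theorem commutator_perm_fin_three_ne_bot : commutator (Perm (Fin 3)) ≠ ⊥ := by
  rw [Ne, commutator_eq_bot_iff, isMulCommutative_iff]
  push Not
  exact ⟨swap 0 1, swap 1 2, by decide⟩

namespace GenVirtBraid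

def parityTransposition (k : ℕ) : Perm (Fin 3) :=
  if k % 2 = 0 then swap 0 1 else swap 1 2

theorem parityTransposition_braid (k : ℕ) :
    parityTransposition k * parityTransposition (k + 1) * parityTransposition k =
      parityTransposition (k + 1) * parityTransposition k * parityTransposition (k + 1) := by
  rcases Nat.mod_two_eq_zero_or_one k with h | h <;>
    simp [parityTransposition, h, Nat.succ_mod_two_eq_zero_iff] <;>
    decide

-- For indices at most `2` the only far pair is `{0, 2}`, which has equal images.
theorem parityTransposition_commute {i j : ℕ} (hi : i ≤ 2) (hj : j ≤ 2)
    (hij : i + 1 < j ∨ j + 1 < i) :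
    Commute (parityTransposition i) (parityTransposition j) := by
  have : i % 2 = j % 2 := by omega
  simp only [parityTransposition, this]
  exact Commute.refl _

theorem lift_parityTransposition_gvbRels {n : ℕ} (hn : n ≤ 4) :
    ∀ r ∈ gvbRels n,
      FreeGroup.lift (fun x ↦ parityTransposition (Sum.elim Fin.val Fin.val x)) r = 1 := by
  have le_two (i : Fin (n - 1)) : (i : ℕ) ≤ 2 := by omega
  rintro r hr
  simp only [gvbRels, Set.mem_union, Set.mem_ofPred_eq] at hr
  rcases hr with ((((((⟨i, j, hij, rfl⟩ | ⟨i, j, hij, rfl⟩) | ⟨i, j, hij, rfl⟩) | ⟨i, j, hij, rfl⟩) |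
    ⟨i, j, hij, rfl⟩) | ⟨i, j, hij, rfl⟩) | ⟨i, j, hij, rfl⟩) <;>
    simp only [σw, ρw, map_mul, map_inv, FreeGroup.lift_apply_of, Sum.elim_inl, Sum.elim_inr,
      mul_inv_eq_one]
  · exact (parityTransposition_commute (le_two i) (le_two j) hij).mul_inv_cancel
  · rw [hij]; exact parityTransposition_braid i
  · exact (parityTransposition_commute (le_two i) (le_two j) hij).mul_inv_cancel
  · rw [hij]; exact parityTransposition_braid i
  · rw [hij]; exact parityTransposition_braid i
  · rw [hij]; exact (parityTransposition_braid i).symm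
  · exact (parityTransposition_commute (le_two i) (le_two j) hij).mul_inv_cancel

def toPermFinThree {n : ℕ} (hn : n ≤ 4) : GVB n →* Perm (Fin 3) :=
  PresentedGroup.toGroup (lift_parityTransposition_gvbRels hn)

theorem toPermFinThree_σ {n : ℕ} (hn : n ≤ 4) (i : Fin (n - 1)) :
    toPermFinThree hn (σ n i) = parityTransposition i :=
  PresentedGroup.toGroup.of _

theorem toPermFinThree_surjective {n : ℕ} (hn₃ : 3 ≤ n) (hn₄ : n ≤ 4) :
    Function.Surjective (toPermFinThree hn₄) := by
  rw [← MonoidHom.mrange_eq_top, eq_top_iff, ← Perm.mclosure_swap_castSucc_succ 2,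
    Submonoid.closure_le]
  rintro _ ⟨k, rfl⟩
  refine ⟨σ n ⟨k, by omega⟩, ?_⟩
  rw [toPermFinThree_σ]
  fin_cases k <;> rfl

end GenVirtBraid

open GenVirtBraid in
/-- The commutator subgroups of `GVB_3` and `GVB_4` are not perfect groups. -/
theorem gvb3_gvb4_commutator_not_perfect :
    ⁅commutator (GVB 3), commutator (GVB 3)⁆ ≠ commutator (GVB 3) ∧
    ⁅commutator (GVB 4), commutator (GVB 4)⁆ ≠ commutator (GVB 4) :=
  ⟨commutator_commutator_ne_of_surjective (toPermFinThree_surjective le_rfl (by norm_num))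
      commutator_perm_fin_three_ne_bot,
    commutator_commutator_ne_of_surjective (toPermFinThree_surjective (by norm_num) le_rfl)
      commutator_perm_fin_three_ne_bot⟩
end
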